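/- arXiv:1510.07001 — 4 statements merged into one kernel-verified Lean document; each statement's English description precedes it below -/
import Mathlib

section
/- Closedness of CIB strategies under best response: suppose λ is a CIB strategy profile and ψ is a CIB update rule consistent with λ, and let (g, μ) = f(λ, ψ). If every agent k ≠ n uses the CIB strategy λ^k (i.e., the behavioral strategy g^k) along with the beliefs generated by ψ, then there exists a CIB strategy λ'^n — that is, a strategy of the form λ'^n_t(x^n_t, (c_t, γ_{ψ,t}(h^c_t), γ̂_t(h^c_t))) depending on the history only through agent n's current local state, the public state, the CIB belief and the CIB signaling-free belief — whose induced behavioral strategy is a best response for agent n under the belief system μ at every history h^n_t ∈ 𝓗^n_t for all t ∈ {1,…,T}: it maximizes agent n's expected continuation utility E_μ[Σ_{τ=t}^T φ^n_τ(C_τ, X_τ, A_τ) | h^n_t] over all behavioral strategies g'^n_{t:T}. -/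
open Finset

noncomputable section

namespace CIBGame

/-- A finite stochastic dynamic game with asymmetric information.  `N` agents act over
times `t = 0,…,T-1`.  `C` is the public state space, `X n`, `A n`, `Y n` are agent `n`'s
local state, action and observation spaces.  `rhoC`, `rhoX` are the (mutually
independent) initial distributions; `pC`, `p`, `q` are the transition and observation
kernels induced by the dynamics `C_{t+1}=f^c_t(C_t,A_t,W^C_t)`,
`Xⁿ_{t+1}=fⁿ_t(Xⁿ_t,A_t,Wⁿ_t)`, `Yⁿ_t=hⁿ_t(Xⁿ_t,A_t,Vⁿ_t)` with mutually independent
noises; `util t n` is agent `n`'s instantaneous utility `φⁿ_t`. -/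
structure Model where
  N : ℕ
  T : ℕ
  C : Type
  X : Fin N → Type
  A : Fin N → Type
  Y : Fin N → Type
  finC : Fintype C
  deqC : DecidableEq C
  finX : ∀ n, Fintype (X n)
  deqX : ∀ n, DecidableEq (X n)
  finA : ∀ n, Fintype (A n)
  deqA : ∀ n, DecidableEq (A n)
  finY : ∀ n, Fintype (Y n)
  deqY : ∀ n, DecidableEq (Y n)
  rhoC : C → ℝ
  rhoX : ∀ n, X n → ℝ
  pC : ℕ → C → C → (∀ m, A m) → ℝ
  p : ℕ → ∀ n, X n → X n → (∀ m, A m) → ℝ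
  q : ℕ → ∀ n, Y n → X n → (∀ m, A m) → ℝ
  util : ℕ → Fin N → C → (∀ m, X m) → (∀ m, A m) → ℝ

attribute [instance] Model.finC Model.deqC Model.finX Model.deqX Model.finA Model.deqA
  Model.finY Model.deqY

abbrev JointX (M : Model) : Type := ∀ n, M.X n
abbrev JointA (M : Model) : Type := ∀ n, M.A n
abbrev JointY (M : Model) : Type := ∀ n, M.Y n

/-- The kernels of the model are genuine probability kernels. -/
def Model.Valid (M : Model) : Prop :=
  (∀ c, 0 ≤ M.rhoC c) ∧ (∑ c, M.rhoC c = 1) ∧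
  (∀ n x, 0 ≤ M.rhoX n x) ∧ (∀ n, ∑ x, M.rhoX n x = 1) ∧
  (∀ t c' c a, 0 ≤ M.pC t c' c a) ∧ (∀ t c a, ∑ c', M.pC t c' c a = 1) ∧
  (∀ t n x' x a, 0 ≤ M.p t n x' x a) ∧ (∀ t n x a, ∑ x', M.p t n x' x a = 1) ∧
  (∀ t n y x a, 0 ≤ M.q t n y x a) ∧ (∀ t n x a, ∑ y, M.q t n y x a = 1)

/-- Common history `h^c_t = (c_{0:t}, a_{0:t-1}, y_{0:t-1})`. -/
abbrev CommonHist (M : Model) (t : ℕ) : Type :=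
  (Fin (t+1) → M.C) × (Fin t → JointA M) × (Fin t → JointY M)

/-- Agent `n`'s private history `hⁿ_t = (xⁿ_{0:t}, h^c_t)`. -/
abbrev PrivHist (M : Model) (n : Fin M.N) (t : ℕ) : Type :=
  (Fin (t+1) → M.X n) × CommonHist M t

/-- A trajectory `x_{0:t}` of the joint local states. -/
abbrev StateTraj (M : Model) (t : ℕ) : Type := Fin (t+1) → JointX M

/-- A full system trajectory `(c_{0:t}, x_{0:t}, a_{0:t-1}, y_{0:t-1})`. -/
abbrev FullTraj (M : Model) (t : ℕ) : Type :=
  (Fin (t+1) → M.C) × StateTraj M t × (Fin t → JointA M) × (Fin t → JointY M)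

/-- A behavioral strategy profile: `g n t` maps agent `n`'s private history at `t` to a
(sub)distribution over his actions. -/
abbrev Strat (M : Model) : Type := ∀ n : Fin M.N, ∀ t : ℕ, PrivHist M n t → M.A n → ℝ

/-- A belief system: `μ n t` maps agent `n`'s private history at `t` to a distribution
over state trajectories `x_{0:t}`. -/
abbrev BeliefSys (M : Model) : Type :=
  ∀ n : Fin M.N, ∀ t : ℕ, PrivHist M n t → StateTraj M t → ℝ

def IsStrat (M : Model) (g : Strat M) : Prop :=
  ∀ n t h, (∀ a, 0 ≤ g n t h a) ∧ (∑ a, g n t h a) = 1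

def IsBelief (M : Model) (μ : BeliefSys M) : Prop :=
  ∀ n t h, (∀ ξ, 0 ≤ μ n t h ξ) ∧ (∑ ξ, μ n t h ξ) = 1

def commonOf (M : Model) {t : ℕ} (f : FullTraj M t) : CommonHist M t :=
  (f.1, f.2.2.1, f.2.2.2)

def currPriv (M : Model) {t : ℕ} (f : FullTraj M t) (n : Fin M.N) : PrivHist M n t :=
  (fun s => f.2.1 s n, commonOf M f)

/-- Agent `n`'s private history at the intermediate time `s < t` along a trajectory. -/
def histAt (M : Model) {t : ℕ} (f : FullTraj M t) (s : Fin t) (n : Fin M.N) :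
    PrivHist M n s.1 :=
  (fun r => f.2.1 ⟨r.1, by have h1 := r.isLt; have h2 := s.isLt; omega⟩ n,
   (fun r => f.1 ⟨r.1, by have h1 := r.isLt; have h2 := s.isLt; omega⟩,
    fun r => f.2.2.1 ⟨r.1, by have h1 := r.isLt; have h2 := s.isLt; omega⟩,
    fun r => f.2.2.2 ⟨r.1, by have h1 := r.isLt; have h2 := s.isLt; omega⟩))

/-- Probability of a full trajectory under the behavioral strategy profile `g`. -/
def trajProb (M : Model) (g : Strat M) (t : ℕ) (f : FullTraj M t) : ℝ :=
  M.rhoC (f.1 ⟨0, Nat.succ_pos t⟩) * (∏ n, M.rhoX n (f.2.1 ⟨0, Nat.succ_pos t⟩ n)) *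
    ∏ s : Fin t,
      ((∏ n, g n s.1 (histAt M f s n) (f.2.2.1 s n)) *
        M.pC s.1 (f.1 ⟨s.1 + 1, by have h2 := s.isLt; omega⟩)
          (f.1 ⟨s.1, by have h2 := s.isLt; omega⟩) (f.2.2.1 s) *
        (∏ n, M.p s.1 n (f.2.1 ⟨s.1 + 1, by have h2 := s.isLt; omega⟩ n)
          (f.2.1 ⟨s.1, by have h2 := s.isLt; omega⟩ n) (f.2.2.1 s)) *
        (∏ n, M.q s.1 n (f.2.2.2 s n)
          (f.2.1 ⟨s.1, by have h2 := s.isLt; omega⟩ n) (f.2.2.1 s)))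

/-- `P^g(hⁿ_t)`: probability of agent `n`'s private history under `g`. -/
def privHistProb (M : Model) (g : Strat M) (n : Fin M.N) (t : ℕ) (h : PrivHist M n t) : ℝ :=
  ∑ f : FullTraj M t, if currPriv M f n = h then trajProb M g t f else 0

/-- `P^g(X_{0:t} = ξ | hⁿ_t)`: conditional distribution of the state trajectory given
agent `n`'s private history, under `g`. -/
def condStateProb (M : Model) (g : Strat M) (n : Fin M.N) (t : ℕ) (h : PrivHist M n t)
    (ξ : StateTraj M t) : ℝ :=
  (∑ f : FullTraj M t, if currPriv M f n = h ∧ f.2.1 = ξ then trajProb M g t f else 0) /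
    privHistProb M g n t h

/-- Unnormalized signaling-free weight of a state trajectory: the open-loop probability
of `(x_{0:t}, y_{0:t-1})` with the actions exogenously fixed to those in the history. -/
def sfWeight (M : Model) (t : ℕ) (a : Fin t → JointA M) (y : Fin t → JointY M)
    (ξ : StateTraj M t) : ℝ :=
  (∏ k, M.rhoX k (ξ ⟨0, Nat.succ_pos t⟩ k)) *
    ∏ s : Fin t, ∏ k,
      (M.p s.1 k (ξ ⟨s.1 + 1, by have h2 := s.isLt; omega⟩ k)
          (ξ ⟨s.1, by have h2 := s.isLt; omega⟩ k) (a s) *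
        M.q s.1 k (y s k) (ξ ⟨s.1, by have h2 := s.isLt; omega⟩ k) (a s))

/-- Unnormalized signaling-free belief `μ̂ⁿ_t(hⁿ_t)` of agent `n` (weight of a state
trajectory compatible with his own observed local states). -/
def sfPrivUn (M : Model) (n : Fin M.N) (t : ℕ) (h : PrivHist M n t) (ξ : StateTraj M t) : ℝ :=
  if (fun s => ξ s n) = h.1 then sfWeight M t h.2.2.1 h.2.2.2 ξ else 0

/-- The CIB signaling-free belief `γ̂_t(h^c_t)(x_t) = P(X_t = x_t | Y_{0:t-1})`, with the
actions fixed open loop. -/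
def sfCIB (M : Model) (t : ℕ) (h : CommonHist M t) (x : JointX M) : ℝ :=
  (∑ ξ : StateTraj M t, if ξ (Fin.last t) = x then sfWeight M t h.2.1 h.2.2 ξ else 0) /
    (∑ ξ : StateTraj M t, sfWeight M t h.2.1 h.2.2 ξ)

def mkPriv (M : Model) {t : ℕ} (hc : CommonHist M t) (ξ : StateTraj M t) (k : Fin M.N) :
    PrivHist M k t :=
  (fun s => ξ s k, hc)

/-- The one-step joint measure `P^{g_t}_μ(x_{0:t}, x_{t+1}, y_t, a_t | hⁿ_t, aⁿ_t)` of
eq. (11): belief times transition, observation and the other agents' strategies. -/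
def oneStep (M : Model) (g : Strat M) (μ : BeliefSys M) (n : Fin M.N) (t : ℕ)
    (h : PrivHist M n t) (ξ : StateTraj M t) (x' : JointX M) (y : JointY M)
    (a : JointA M) : ℝ :=
  μ n t h ξ * (∏ k, M.p t k (x' k) (ξ (Fin.last t) k) a) *
    (∏ k, M.q t k (y k) (ξ (Fin.last t) k) a) *
    ∏ k ∈ Finset.univ.erase n, g k t (mkPriv M h.2 ξ k) (a k)

/-- Extension of a private history by one period. -/
def extendPriv (M : Model) {n : Fin M.N} {t : ℕ} (h : PrivHist M n t) (x' : M.X n)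
    (c' : M.C) (a : JointA M) (y : JointY M) : PrivHist M n (t+1) :=
  (Fin.snoc h.1 x', (Fin.snoc h.2.1 c', Fin.snoc h.2.2.1 a, Fin.snoc h.2.2.2 y))

/-- `P^{g_t}_μ(xⁿ_{t+1}, y_t, a_t | hⁿ_t, aⁿ_t)`: the normalizer in Bayes' rule. -/
def newStateProb (M : Model) (g : Strat M) (μ : BeliefSys M) (n : Fin M.N) (t : ℕ)
    (h : PrivHist M n t) (x' : M.X n) (y : JointY M) (a : JointA M) : ℝ :=
  ∑ ξ : StateTraj M t, ∑ z : JointX M,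
    if z n = x' then oneStep M g μ n t h ξ z y a else 0

/-- Consistency of a belief system with a strategy profile: beliefs are probability
distributions, the time-`0` beliefs are the (product) prior conditioned on the agent's
own local state, updates follow Bayes' rule whenever possible, and otherwise assign zero
mass to every trajectory outside the support of the signaling-free belief. -/
def Consistent (M : Model) (g : Strat M) (μ : BeliefSys M) : Prop :=
  IsBelief M μ ∧
  (∀ n (h : PrivHist M n 0) (ξ : StateTraj M 0),
    μ n 0 h ξ = (if (fun s => ξ s n) = h.1 then (1:ℝ) else 0) *
      ∏ k ∈ Finset.univ.erase n, M.rhoX k (ξ (Fin.last 0) k)) ∧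
  (∀ n t (h : PrivHist M n t) (x' : M.X n) (c' : M.C) (a : JointA M) (y : JointY M),
    (0 < newStateProb M g μ n t h x' y a →
      ∀ ζ : StateTraj M (t+1),
        μ n (t+1) (extendPriv M h x' c' a y) ζ =
          (if ζ (Fin.last (t+1)) n = x' then (1:ℝ) else 0) *
            (oneStep M g μ n t h (fun s => ζ ⟨s.1, by have h2 := s.isLt; omega⟩)
                (ζ (Fin.last (t+1))) y a /
              newStateProb M g μ n t h x' y a)) ∧
    (newStateProb M g μ n t h x' y a = 0 →
      ∀ ζ : StateTraj M (t+1),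
        (0 < ∑ ζ' : StateTraj M (t+1), sfPrivUn M n (t+1) (extendPriv M h x' c' a y) ζ') →
        sfPrivUn M n (t+1) (extendPriv M h x' c' a y) ζ = 0 →
        μ n (t+1) (extendPriv M h x' c' a y) ζ = 0))

def extendFull (M : Model) {t : ℕ} (f : FullTraj M t) (a : JointA M) (y : JointY M)
    (c' : M.C) (x' : JointX M) : FullTraj M (t+1) :=
  (Fin.snoc f.1 c', Fin.snoc f.2.1 x', Fin.snoc f.2.2.1 a, Fin.snoc f.2.2.2 y)

/-- Expected continuation utility of agent `n` over the next `k` periods, starting from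
the full system history `f` at time `t`, under the strategy profile `g`. -/
def contUtil (M : Model) (g : Strat M) (n : Fin M.N) : ℕ → (t : ℕ) → FullTraj M t → ℝ
  | 0, _, _ => 0
  | k+1, t, f =>
    ∑ a : JointA M,
      (∏ m, g m t (currPriv M f m) (a m)) *
        (M.util t n (f.1 (Fin.last t)) (f.2.1 (Fin.last t)) a +
          ∑ c' : M.C, ∑ x' : JointX M, ∑ y : JointY M,
            M.pC t c' (f.1 (Fin.last t)) a *
              (∏ m, M.p t m (x' m) (f.2.1 (Fin.last t) m) a) *
              (∏ m, M.q t m (y m) (f.2.1 (Fin.last t) m) a) *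
              contUtil M g n k (t+1) (extendFull M f a y c' x'))

/-- `E^g_μ[∑_{τ=t}^{T-1} φⁿ_τ(C_τ,X_τ,A_τ) | hⁿ_t]`: agent `n`'s expected continuation
utility at his private history `h`, under the belief system `μ` and profile `g`. -/
def expContUtil (M : Model) (g : Strat M) (μ : BeliefSys M) (n : Fin M.N) (t : ℕ)
    (h : PrivHist M n t) : ℝ :=
  ∑ ξ : StateTraj M t, μ n t h ξ * contUtil M g n (M.T - t) t (h.2.1, ξ, h.2.2.1, h.2.2.2)

/-- Sequential rationality: no agent has a profitable unilateral deviation at any of his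
private histories, where utilities are evaluated with the belief system `μ`. -/
def SeqRational (M : Model) (g : Strat M) (μ : BeliefSys M) : Prop :=
  ∀ n t (h : PrivHist M n t) (g' : Strat M), IsStrat M g' → (∀ m, m ≠ n → g' m = g m) →
    expContUtil M g' μ n t h ≤ expContUtil M g μ n t h

/-- Perfect Bayesian equilibrium: a sequentially rational and consistent pair. -/
def IsPBE (M : Model) (g : Strat M) (μ : BeliefSys M) : Prop :=
  IsStrat M g ∧ SeqRational M g μ ∧ Consistent M g μ

/-- A belief on the joint local states. -/
abbrev Bel (M : Model) : Type := JointX M → ℝ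

/-- `𝓑_t = 𝒞 × Δ(𝒳) × Δ(𝒳)`: public state, CIB belief, CIB signaling-free belief. -/
abbrev BSpace (M : Model) : Type := M.C × Bel M × Bel M

/-- A CIB strategy profile `λⁿ_t : 𝒳ⁿ × 𝓑_t → Δ(𝒜ⁿ)`. -/
abbrev CIBStrat (M : Model) : Type := ∀ n : Fin M.N, ℕ → M.X n → BSpace M → M.A n → ℝ

/-- A CIB update rule `ψⁿ_t : 𝒴ⁿ × 𝒜 × 𝓑_t → Δ(𝒳ⁿ)`. -/
abbrev CIBUpdate (M : Model) : Type :=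
  ∀ n : Fin M.N, ℕ → M.Y n → JointA M → BSpace M → M.X n → ℝ

/-- The `n`-marginal of a joint belief. -/
def marg (M : Model) (π : Bel M) (n : Fin M.N) (x : M.X n) : ℝ :=
  ∑ ξ : JointX M, if ξ n = x then π ξ else 0

/-- The signaling-free update `ψ̂ⁿ_t(y, a, π̂)`. -/
def sfUpdate (M : Model) (t : ℕ) (n : Fin M.N) (y : M.Y n) (a : JointA M) (piH : Bel M)
    (x' : M.X n) : ℝ :=
  (∑ x : M.X n, M.p t n x' x a * M.q t n y x a * marg M piH n x) /
    (∑ x : M.X n, M.q t n y x a * marg M piH n x)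

def IsCIBStrat (M : Model) (lam : CIBStrat M) : Prop :=
  ∀ n t x b, (∀ a, 0 ≤ lam n t x b a) ∧ (∑ a, lam n t x b a) = 1

def IsCIBUpdate (M : Model) (ψ : CIBUpdate M) : Prop :=
  ∀ n t y a b, (∀ x', 0 ≤ ψ n t y a b x') ∧ (∑ x', ψ n t y a b x') = 1

/-- Consistency of a CIB update rule `ψ` with a CIB strategy profile `λ` (Definition 5):
Bayes' rule with likelihood weight `qⁿ_t(yⁿ;x,a)·λⁿ_t(x,b)(aⁿ)` whenever the normalizer
is positive, and otherwise zero mass wherever the signaling-free update vanishes. -/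
def UpdateConsistent (M : Model) (ψ : CIBUpdate M) (lam : CIBStrat M) : Prop :=
  ∀ n t (y : M.Y n) (a : JointA M) (b : BSpace M),
    (0 < (∑ x : M.X n, M.q t n y x a * lam n t x b (a n) * marg M b.2.1 n x) →
      ∀ x', ψ n t y a b x' =
        (∑ x : M.X n,
            M.p t n x' x a * (M.q t n y x a * lam n t x b (a n)) * marg M b.2.1 n x) /
          (∑ x : M.X n, M.q t n y x a * lam n t x b (a n) * marg M b.2.1 n x)) ∧
    ((∑ x : M.X n, M.q t n y x a * lam n t x b (a n) * marg M b.2.1 n x) = 0 →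
      ∀ x', 0 < (∑ x : M.X n, M.q t n y x a * marg M b.2.2 n x) →
        (∑ x : M.X n, M.p t n x' x a * M.q t n y x a * marg M b.2.2 n x) = 0 →
        ψ n t y a b x' = 0)

def restrictC (M : Model) {t : ℕ} (h : CommonHist M (t+1)) : CommonHist M t :=
  (fun s => h.1 ⟨s.1, by have h2 := s.isLt; omega⟩,
   fun s => h.2.1 ⟨s.1, by have h2 := s.isLt; omega⟩,
   fun s => h.2.2 ⟨s.1, by have h2 := s.isLt; omega⟩)

/-- The CIB belief system `γ_ψ` induced recursively by a CIB update rule `ψ`. -/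
def gammaPsi (M : Model) (ψ : CIBUpdate M) : (t : ℕ) → CommonHist M t → JointX M → ℝ
  | 0, _, ξ => ∏ k, M.rhoX k (ξ k)
  | t+1, h, ξ =>
    ∏ k, ψ k t (h.2.2 (Fin.last t) k) (h.2.1 (Fin.last t))
      (h.1 ⟨t, by omega⟩, gammaPsi M ψ t (restrictC M h), sfCIB M t (restrictC M h)) (ξ k)

/-- The behavioral strategy profile induced by a CIB strategy profile and a CIB update
rule: `gⁿ_t(hⁿ_t) = λⁿ_t(xⁿ_t, (c_t, γ_{ψ,t}(h^c_t), γ̂_t(h^c_t)))`. -/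
def stratOf (M : Model) (lam : CIBStrat M) (ψ : CIBUpdate M) : Strat M :=
  fun n t h a =>
    lam n t (h.1 (Fin.last t))
      (h.2.1 (Fin.last t), gammaPsi M ψ t h.2, sfCIB M t h.2) a

/-- `k`-marginal of a distribution over state trajectories. -/
def margTraj (M : Model) {t : ℕ} (ν : StateTraj M t → ℝ) (k : Fin M.N)
    (xk : Fin (t+1) → M.X k) : ℝ :=
  ∑ ξ : StateTraj M t, if (fun s => ξ s k) = xk then ν ξ else 0

/-- The product form of the belief system of Lemma 2:
`μⁿ_t(hⁿ_t)(x_{0:t}) = 1{xⁿ_{0:t} matches hⁿ_t} ∏_{k≠n} μ^c_t(h^c_t)(x^k_{0:t})`. -/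
def ProductForm (M : Model) (μ : BeliefSys M)
    (μc : ∀ t : ℕ, CommonHist M t → StateTraj M t → ℝ) : Prop :=
  ∀ n t (h : PrivHist M n t) (ξ : StateTraj M t),
    μ n t h ξ = (if (fun s => ξ s n) = h.1 then (1:ℝ) else 0) *
      ∏ k ∈ Finset.univ.erase n, margTraj M (μc t h.2) k (fun s => ξ s k)

/-- The time-`t` marginal of `μ^c_t` agrees with the CIB belief `γ_{ψ,t}` (eq. (29)). -/
def MarginalMatch (M : Model) (ψ : CIBUpdate M)
    (μc : ∀ t : ℕ, CommonHist M t → StateTraj M t → ℝ) : Prop :=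
  ∀ t (h : CommonHist M t) (k : Fin M.N) (xk : M.X k),
    (∑ ξ : StateTraj M t, if ξ (Fin.last t) k = xk then μc t h ξ else 0) =
      marg M (gammaPsi M ψ t h) k xk

/-- The joint next-period CIB belief `ψ_t(y_t, a_t, b_t) = ∏_k ψᵏ_t(yᵏ_t, a_t, b_t)`. -/
def jointPsiNext (M : Model) (ψ : CIBUpdate M) (t : ℕ) (y : JointY M) (a : JointA M)
    (b : BSpace M) : Bel M :=
  fun ξ => ∏ k, ψ k t (y k) a b (ξ k)

/-- The joint next-period signaling-free belief `ψ̂_t(y_t, a_t, π̂_t)`. -/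
def jointSfNext (M : Model) (t : ℕ) (y : JointY M) (a : JointA M) (piH : Bel M) : Bel M :=
  fun ξ => ∏ k, sfUpdate M t k (y k) a piH (ξ k)

/-- Player `n`'s interim expected utility in the stage game `G_t(V', ψ_t, b_t)` when his
type is `xn`, he plays `an`, and the others play the CIB strategies `lamt`:
`E^{λ^{-n}_t}_{π_t}[φⁿ_t(c_t,X_t,A_t) + V'ⁿ(Xⁿ_{t+1}, B_{t+1}) | xⁿ_t, aⁿ_t]`. -/
def stageEU (M : Model) (V' : ∀ n : Fin M.N, M.X n → BSpace M → ℝ) (ψ : CIBUpdate M)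
    (lamt : ∀ n : Fin M.N, M.X n → BSpace M → M.A n → ℝ) (t : ℕ) (b : BSpace M)
    (n : Fin M.N) (xn : M.X n) (an : M.A n) : ℝ :=
  (∑ ξ : JointX M, (if ξ n = xn then b.2.1 ξ else 0) *
      ∑ a : JointA M,
        (if a n = an then ∏ k ∈ Finset.univ.erase n, lamt k (ξ k) b (a k) else 0) *
          (M.util t n b.1 ξ a +
            ∑ c' : M.C, ∑ y : JointY M, ∑ x' : M.X n,
              M.pC t c' b.1 a * (∏ k, M.q t k (y k) (ξ k) a) * M.p t n x' (ξ n) a *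
                V' n x' (c', jointPsiNext M ψ t y a b, jointSfNext M t y a b.2.2))) /
    marg M b.2.1 n xn

/-- `lamt ∈ BNE_t(V', ψ_t)`: for every `b_t`, the restriction of `lamt` to `b_t` is a
Bayesian Nash equilibrium of the stage game `G_t(V', ψ_t, b_t)`. -/
def IsBNEat (M : Model) (V' : ∀ n : Fin M.N, M.X n → BSpace M → ℝ) (ψ : CIBUpdate M)
    (lamt : ∀ n : Fin M.N, M.X n → BSpace M → M.A n → ℝ) (t : ℕ) : Prop :=
  ∀ (b : BSpace M) (n : Fin M.N) (xn : M.X n) (an : M.A n), 0 < lamt n xn b an →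
    ∀ a' : M.A n, stageEU M V' ψ lamt t b n xn a' ≤ stageEU M V' ψ lamt t b n xn an

/-- The value update `Dⁿ_t(V', λ_t, ψ_t)(xⁿ_t, b_t) = E^{λ_t}_{π_t}[Uⁿ | xⁿ_t]`. -/
def valUpd (M : Model) (V' : ∀ n : Fin M.N, M.X n → BSpace M → ℝ) (ψ : CIBUpdate M)
    (lamt : ∀ n : Fin M.N, M.X n → BSpace M → M.A n → ℝ) (t : ℕ) (n : Fin M.N)
    (xn : M.X n) (b : BSpace M) : ℝ :=
  ∑ an : M.A n, lamt n xn b an * stageEU M V' ψ lamt t b n xn an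


/-! ### Auxiliary lemmas for stmt_5 -/

section Aux5

lemma aux_sum_pi_prod {ι : Type} [Fintype ι] [DecidableEq ι] {α : ι → Type}
    [∀ i, Fintype (α i)] (G : ∀ i, α i → ℝ) :
    (∑ x : (∀ i, α i), ∏ i, G i (x i)) = ∏ i, ∑ v, G i v := by
  rw [Finset.prod_univ_sum]
  rw [Fintype.piFinset_univ]

lemma aux_sum_traj {M : Model} {t : ℕ} (F : StateTraj M t → ℝ) :
    ∑ ξ : StateTraj M t, F ξ = ∑ p : (∀ k, Fin (t+1) → M.X k), F (fun s k => p k s) := by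
  exact Fintype.sum_equiv (Equiv.piComm fun s k => M.X k) _ _ (fun ξ => rfl)

lemma aux_sum_traj_prod {M : Model} {t : ℕ} (G : ∀ k, (Fin (t+1) → M.X k) → ℝ) :
    (∑ ξ : StateTraj M t, ∏ k, G k (fun s => ξ s k)) = ∏ k, ∑ τ, G k τ := by
  rw [aux_sum_traj]
  exact aux_sum_pi_prod G

def aux_snocEquiv (α : Type) (t : ℕ) : (Fin (t+1) → α) ≃ (Fin t → α) × α where
  toFun f := (Fin.init f, f (Fin.last t))
  invFun p := Fin.snoc p.1 p.2
  left_inv f := Fin.snoc_init_self f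
  right_inv p := by simp

lemma aux_sum_snoc {α : Type} [Fintype α] [DecidableEq α] (t : ℕ)
    (F : (Fin (t+1) → α) → ℝ) :
    ∑ f, F f = ∑ τ : Fin t → α, ∑ v, F (Fin.snoc τ v) := by
  have h1 : ∑ τ : Fin t → α, ∑ v, F (Fin.snoc τ v)
      = ∑ p : (Fin t → α) × α, F (Fin.snoc p.1 p.2) := by
    rw [Fintype.sum_prod_type]
  rw [h1]
  exact Fintype.sum_equiv (aux_snocEquiv α t) _ (fun p => F (Fin.snoc p.1 p.2))
    (fun f => by simp [aux_snocEquiv])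

lemma aux_snoc_comp {γ : Type} {β : Type} {t : ℕ} (f : Fin t → (γ → β)) (g : γ → β)
    (s : Fin (t+1)) (k : γ) :
    (Fin.snoc (α := fun _ : Fin (t+1) => γ → β) f g s) k
      = Fin.snoc (α := fun _ : Fin (t+1) => β) (fun r => f r k) (g k) s := by
  induction s using Fin.lastCases with
  | last => simp
  | cast i => simp

lemma aux_snoc_mk {α : Sort*} {t : ℕ} (f : Fin t → α) (x : α) (i : ℕ) (h : i < t)
    (h2 : i < t + 1) :
    Fin.snoc (α := fun _ => α) f x ⟨i, h2⟩ = f ⟨i, h⟩ := by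
  have : (⟨i, h2⟩ : Fin (t+1)) = Fin.castSucc ⟨i, h⟩ := rfl
  rw [this, Fin.snoc_castSucc]

lemma aux_fiber {ι : Type} [Fintype ι] {α : Type} [Fintype α] [DecidableEq α]
    (key : ι → α) (F : ι → ℝ) (φ : α → ℝ) :
    ∑ i, φ (key i) * F i = ∑ v, φ v * ∑ i, if key i = v then F i else 0 := by
  have : ∀ i : ι, φ (key i) * F i = ∑ v, if key i = v then φ v * F i else 0 := by
    intro i
    rw [Finset.sum_ite_eq (Finset.univ : Finset α) (key i) (fun v => φ v * F i)]
    simp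
  rw [Finset.sum_congr rfl (fun i _ => this i), Finset.sum_comm]
  refine Finset.sum_congr rfl (fun v _ => ?_)
  rw [Finset.mul_sum]
  refine Finset.sum_congr rfl (fun i _ => ?_)
  by_cases h : key i = v <;> simp [h]

lemma aux_prod_ite {ι : Type} [Fintype ι] [DecidableEq ι] {α : ι → Type}
    (P : ∀ i, α i → Prop) [∀ i v, Decidable (P i v)] (f : ∀ i, α i → ℝ) (x : ∀ i, α i) :
    (∏ i, if P i (x i) then f i (x i) else 0)
      = if (∀ i, P i (x i)) then ∏ i, f i (x i) else 0 := by
  by_cases h : ∀ i, P i (x i)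
  · rw [if_pos h]
    exact Finset.prod_congr rfl (fun i _ => if_pos (h i))
  · rw [if_neg h]
    push_neg at h
    obtain ⟨i, hi⟩ := h
    exact Finset.prod_eq_zero (Finset.mem_univ i) (if_neg hi)

lemma aux_sum_pi_split {ι : Type} [Fintype ι] [DecidableEq ι] {α : ι → Type}
    [∀ i, Fintype (α i)] [∀ i, DecidableEq (α i)] (n : ι) (v : α n) (f : ∀ i, α i → ℝ) :
    (∑ x : ∀ i, α i, if x n = v then ∏ i, f i (x i) else 0)
      = (f n v) * ∏ i ∈ Finset.univ.erase n, ∑ w, f i w := by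
  have key : ∀ x : ∀ i, α i,
      (if x n = v then ∏ i, f i (x i) else 0)
        = ∏ i, (f i (x i) * (if h : i = n then (if h ▸ (x i) = v then 1 else 0) else 1)) := by
    intro x
    rw [Finset.prod_mul_distrib]
    have h2 : (∏ i, (if h : i = n then (if h ▸ (x i) = v then (1:ℝ) else 0) else 1))
        = if x n = v then 1 else 0 := by
      rw [← Finset.mul_prod_erase Finset.univ _ (Finset.mem_univ n)]
      have : ∀ i ∈ Finset.univ.erase n,
          (if h : i = n then (if h ▸ (x i) = v then (1:ℝ) else 0) else 1) = 1 := by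
        intro i hi
        rw [dif_neg (Finset.ne_of_mem_erase hi)]
      rw [Finset.prod_congr rfl this, Finset.prod_const_one, mul_one, dif_pos rfl]
    rw [h2]
    by_cases h : x n = v <;> simp [h]
  rw [Finset.sum_congr rfl (fun x _ => key x),
    aux_sum_pi_prod (fun i w => f i w * (if h : i = n then (if h ▸ w = v then (1:ℝ) else 0) else 1))]
  rw [← Finset.mul_prod_erase Finset.univ _ (Finset.mem_univ n)]
  congr 1
  · rw [show (∑ w, f n w * (if h : n = n then (if h ▸ w = v then (1:ℝ) else 0) else 1))
        = ∑ w, if w = v then f n w else 0 from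
      Finset.sum_congr rfl (fun w _ => by rw [dif_pos rfl]; by_cases h : w = v <;> simp [h])]
    rw [Finset.sum_ite_eq' Finset.univ v (fun w => f n w)]
    simp
  · refine Finset.prod_congr rfl (fun i hi => Finset.sum_congr rfl (fun w _ => ?_))
    rw [dif_neg (Finset.ne_of_mem_erase hi), mul_one]

section Aux5M

variable (M : Model)

/-- Per-agent signaling-free weight of a local-state trajectory. -/
def auxW {t : ℕ} (ah : Fin t → JointA M) (yh : Fin t → JointY M) (k : Fin M.N)
    (τ : Fin (t+1) → M.X k) : ℝ :=
  M.rhoX k (τ ⟨0, Nat.succ_pos t⟩) *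
    ∏ s : Fin t,
      (M.p s.1 k (τ s.succ) (τ s.castSucc) (ah s) *
       M.q s.1 k (yh s k) (τ s.castSucc) (ah s))

lemma auxW_nonneg (hM : M.Valid) {t : ℕ} (ah : Fin t → JointA M) (yh : Fin t → JointY M)
    (k : Fin M.N) (τ : Fin (t+1) → M.X k) : 0 ≤ auxW M ah yh k τ := by
  obtain ⟨h1, h2, h3, h4, h5, h6, h7, h8, h9, h10⟩ := hM
  unfold auxW
  exact mul_nonneg (h3 _ _) (Finset.prod_nonneg fun s _ =>
    mul_nonneg (h7 _ _ _ _ _) (h9 _ _ _ _ _))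

lemma sfWeight_eq {t : ℕ} (ah : Fin t → JointA M) (yh : Fin t → JointY M)
    (ξ : StateTraj M t) :
    sfWeight M t ah yh ξ = ∏ k, auxW M ah yh k (fun s => ξ s k) := by
  simp only [sfWeight, auxW]
  rw [Finset.prod_mul_distrib]
  congr 1
  exact Finset.prod_comm

lemma sfCIB_eq (t : ℕ) (hc : CommonHist M t) (x : JointX M) :
    sfCIB M t hc x =
      (∏ k, ∑ τ : Fin (t+1) → M.X k,
          if τ (Fin.last t) = x k then auxW M hc.2.1 hc.2.2 k τ else 0) /
      (∏ k, ∑ τ : Fin (t+1) → M.X k, auxW M hc.2.1 hc.2.2 k τ) := by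
  unfold sfCIB
  congr 1
  · have key : ∀ ξ : StateTraj M t,
        (if ξ (Fin.last t) = x then sfWeight M t hc.2.1 hc.2.2 ξ else 0)
          = ∏ k, (if ξ (Fin.last t) k = x k
              then auxW M hc.2.1 hc.2.2 k (fun s => ξ s k) else 0) := by
      intro ξ
      by_cases h : ξ (Fin.last t) = x
      · rw [if_pos h, sfWeight_eq]
        refine Finset.prod_congr rfl (fun k _ => ?_)
        rw [if_pos (congrFun h k)]
      · rw [if_neg h]
        have hex : ∃ k, ξ (Fin.last t) k ≠ x k := by
          by_contra hc2
          push_neg at hc2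
          exact h (funext hc2)
        obtain ⟨k, hk⟩ := hex
        symm
        refine Finset.prod_eq_zero (Finset.mem_univ k) ?_
        rw [if_neg hk]
    rw [Finset.sum_congr rfl (fun ξ _ => key ξ),
      aux_sum_traj_prod (fun k τ =>
        if τ (Fin.last t) = x k then auxW M hc.2.1 hc.2.2 k τ else 0)]
  · rw [Finset.sum_congr rfl (fun ξ _ => sfWeight_eq M hc.2.1 hc.2.2 ξ),
      aux_sum_traj_prod (fun k τ => auxW M hc.2.1 hc.2.2 k τ)]

lemma gammaPsi_nonneg (ψ : CIBUpdate M) (hM : M.Valid) (hψ : IsCIBUpdate M ψ)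
    (t : ℕ) (hc : CommonHist M t) (ξ : JointX M) : 0 ≤ gammaPsi M ψ t hc ξ := by
  cases t with
  | zero => exact Finset.prod_nonneg fun k _ => hM.2.2.1 k _
  | succ t => exact Finset.prod_nonneg fun k _ => (hψ k t _ _ _).1 _

lemma marg_nonneg (π : Bel M) (hπ : ∀ ξ, 0 ≤ π ξ) (k : Fin M.N) (x : M.X k) :
    0 ≤ marg M π k x :=
  Finset.sum_nonneg fun ξ _ => by by_cases h : ξ k = x <;> simp [h, hπ ξ]

lemma restrictC_snoc (t : ℕ) (hc : CommonHist M t) (c' : M.C) (a : JointA M)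
    (y : JointY M) :
    restrictC M (Fin.snoc hc.1 c', Fin.snoc hc.2.1 a, Fin.snoc hc.2.2 y) = hc := by
  obtain ⟨h1, h2, h3⟩ := hc
  unfold restrictC
  refine congrArg₂ Prod.mk ?_ (congrArg₂ Prod.mk ?_ ?_) <;>
    funext s <;> exact aux_snoc_mk _ _ _ s.isLt _

lemma gammaPsi_snoc (ψ : CIBUpdate M) (t : ℕ) (hc : CommonHist M t) (c' : M.C)
    (a : JointA M) (y : JointY M) :
    gammaPsi M ψ (t+1) (Fin.snoc hc.1 c', Fin.snoc hc.2.1 a, Fin.snoc hc.2.2 y)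
      = jointPsiNext M ψ t y a (hc.1 (Fin.last t), gammaPsi M ψ t hc, sfCIB M t hc) := by
  have e1 : (Fin.snoc hc.2.2 y : Fin (t+1) → JointY M) (Fin.last t) = y :=
    Fin.snoc_last _ _
  have e2 : (Fin.snoc hc.2.1 a : Fin (t+1) → JointA M) (Fin.last t) = a :=
    Fin.snoc_last _ _
  have e3 : (Fin.snoc hc.1 c' : Fin (t+2) → M.C) ⟨t, by omega⟩ = hc.1 (Fin.last t) :=
    aux_snoc_mk _ _ _ (Nat.lt_succ_self t) _
  funext ξ
  simp only [gammaPsi, jointPsiNext]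
  rw [restrictC_snoc]
  refine Finset.prod_congr rfl (fun k _ => ?_)
  rw [e1, e2, e3]

lemma marg_jointPsiNext (ψ : CIBUpdate M) (hψ : IsCIBUpdate M ψ) (t : ℕ)
    (y : JointY M) (a : JointA M) (b : BSpace M) (j : Fin M.N) (v : M.X j) :
    marg M (jointPsiNext M ψ t y a b) j v = ψ j t (y j) a b v := by
  unfold marg jointPsiNext
  rw [aux_sum_pi_split j v (fun k w => ψ k t (y k) a b w)]
  rw [Finset.prod_congr rfl (fun k _ => (hψ k t (y k) a b).2), Finset.prod_const_one,
    mul_one]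

lemma auxW_snoc {t : ℕ} (ah : Fin t → JointA M) (yh : Fin t → JointY M)
    (a : JointA M) (y : JointY M) (k : Fin M.N) (τ : Fin (t+1) → M.X k) (v : M.X k) :
    auxW M (Fin.snoc ah a) (Fin.snoc yh y) k (Fin.snoc τ v)
      = auxW M ah yh k τ *
        (M.p t k v (τ (Fin.last t)) a * M.q t k (y k) (τ (Fin.last t)) a) := by
  unfold auxW
  rw [Fin.prod_univ_castSucc]
  rw [aux_snoc_mk τ v 0 (Nat.succ_pos t) (Nat.succ_pos (t+1))]
  simp only [Fin.succ_castSucc, Fin.snoc_castSucc, Fin.succ_last, Fin.snoc_last,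
    Fin.coe_castSucc, Fin.val_last]
  rw [mul_assoc]

lemma aux_Z_snoc (hM : M.Valid) {t : ℕ} (ah : Fin t → JointA M) (yh : Fin t → JointY M)
    (a : JointA M) (y : JointY M) (k : Fin M.N) :
    (∑ τ : Fin (t+2) → M.X k, auxW M (Fin.snoc ah a) (Fin.snoc yh y) k τ)
      = ∑ v, M.q t k (y k) v a *
          (∑ τ : Fin (t+1) → M.X k, if τ (Fin.last t) = v then auxW M ah yh k τ else 0) := by
  rw [aux_sum_snoc]
  have key : ∀ τ : Fin (t+1) → M.X k,
      (∑ w, auxW M (Fin.snoc ah a) (Fin.snoc yh y) k (Fin.snoc τ w))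
        = M.q t k (y k) (τ (Fin.last t)) a * auxW M ah yh k τ := by
    intro τ
    rw [Finset.sum_congr rfl (fun w _ => auxW_snoc M ah yh a y k τ w)]
    have : ∀ w, auxW M ah yh k τ * (M.p t k w (τ (Fin.last t)) a *
        M.q t k (y k) (τ (Fin.last t)) a)
        = (auxW M ah yh k τ * M.q t k (y k) (τ (Fin.last t)) a) * M.p t k w (τ (Fin.last t)) a := by
      intro w; ring
    rw [Finset.sum_congr rfl (fun w _ => this w), ← Finset.mul_sum,
      hM.2.2.2.2.2.2.2.1 t k (τ (Fin.last t)) a, mul_one, mul_comm]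
  rw [Finset.sum_congr rfl (fun τ _ => key τ)]
  exact aux_fiber (fun τ => τ (Fin.last t)) (auxW M ah yh k) (fun v => M.q t k (y k) v a)

lemma aux_Num_snoc {t : ℕ} (ah : Fin t → JointA M) (yh : Fin t → JointY M)
    (a : JointA M) (y : JointY M) (k : Fin M.N) (v' : M.X k) :
    (∑ τ : Fin (t+2) → M.X k,
        if τ (Fin.last (t+1)) = v' then auxW M (Fin.snoc ah a) (Fin.snoc yh y) k τ else 0)
      = ∑ v, (M.p t k v' v a * M.q t k (y k) v a) *
          (∑ τ : Fin (t+1) → M.X k, if τ (Fin.last t) = v then auxW M ah yh k τ else 0) := by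
  rw [aux_sum_snoc]
  have key : ∀ τ : Fin (t+1) → M.X k,
      (∑ w, if (Fin.snoc τ w : Fin (t+2) → M.X k) (Fin.last (t+1)) = v'
          then auxW M (Fin.snoc ah a) (Fin.snoc yh y) k (Fin.snoc τ w) else 0)
        = (M.p t k v' (τ (Fin.last t)) a * M.q t k (y k) (τ (Fin.last t)) a)
            * auxW M ah yh k τ := by
    intro τ
    have : ∀ w, (if (Fin.snoc τ w : Fin (t+2) → M.X k) (Fin.last (t+1)) = v'
        then auxW M (Fin.snoc ah a) (Fin.snoc yh y) k (Fin.snoc τ w) else 0)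
        = if w = v' then auxW M (Fin.snoc ah a) (Fin.snoc yh y) k (Fin.snoc τ w) else 0 := by
      intro w
      rw [show (Fin.snoc τ w : Fin (t+2) → M.X k) (Fin.last (t+1)) = w from Fin.snoc_last _ _]
    rw [Finset.sum_congr rfl (fun w _ => this w),
      Finset.sum_ite_eq' Finset.univ v'
        (fun w => auxW M (Fin.snoc ah a) (Fin.snoc yh y) k (Fin.snoc τ w))]
    rw [if_pos (Finset.mem_univ v'), auxW_snoc M ah yh a y k τ v']
    ring
  rw [Finset.sum_congr rfl (fun τ _ => key τ)]
  exact aux_fiber (fun τ => τ (Fin.last t)) (auxW M ah yh k)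
    (fun v => M.p t k v' v a * M.q t k (y k) v a)

lemma aux_div_div (A B Z : ℝ) (hZ : Z ≠ 0) : (A/Z)/(B/Z) = A/B := by
  rcases eq_or_ne B 0 with h|h
  · simp [h]
  · field_simp

lemma sf_marg (t : ℕ) (hc : CommonHist M t)
    (hZ : ∀ j : Fin M.N, (∑ τ : Fin (t+1) → M.X j, auxW M hc.2.1 hc.2.2 j τ) ≠ 0)
    (k : Fin M.N) (v : M.X k) :
    marg M (sfCIB M t hc) k v
      = (∑ τ : Fin (t+1) → M.X k, if τ (Fin.last t) = v then auxW M hc.2.1 hc.2.2 k τ else 0)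
        / (∑ τ : Fin (t+1) → M.X k, auxW M hc.2.1 hc.2.2 k τ) := by
  unfold marg
  have key : ∀ x : JointX M, (if x k = v then sfCIB M t hc x else 0)
      = (if x k = v then
          ∏ j, ∑ τ : Fin (t+1) → M.X j,
            if τ (Fin.last t) = x j then auxW M hc.2.1 hc.2.2 j τ else 0
        else 0) / (∏ j, ∑ τ : Fin (t+1) → M.X j, auxW M hc.2.1 hc.2.2 j τ) := by
    intro x
    rw [sfCIB_eq]
    by_cases h : x k = v <;> simp [h]
  rw [Finset.sum_congr rfl (fun x _ => key x), ← Finset.sum_div]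
  rw [aux_sum_pi_split k v (fun j w => ∑ τ : Fin (t+1) → M.X j,
    if τ (Fin.last t) = w then auxW M hc.2.1 hc.2.2 j τ else 0)]
  have hNZ : ∀ j : Fin M.N, (∑ w, ∑ τ : Fin (t+1) → M.X j,
      if τ (Fin.last t) = w then auxW M hc.2.1 hc.2.2 j τ else 0)
      = ∑ τ : Fin (t+1) → M.X j, auxW M hc.2.1 hc.2.2 j τ := by
    intro j
    rw [Finset.sum_comm]
    refine Finset.sum_congr rfl (fun τ _ => ?_)
    rw [Finset.sum_ite_eq Finset.univ (τ (Fin.last t)) (fun _ => auxW M hc.2.1 hc.2.2 j τ)]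
    rw [if_pos (Finset.mem_univ _)]
  rw [Finset.prod_congr rfl (fun j _ => hNZ j)]
  rw [← Finset.mul_prod_erase Finset.univ
    (fun j => ∑ τ : Fin (t+1) → M.X j, auxW M hc.2.1 hc.2.2 j τ) (Finset.mem_univ k)]
  exact mul_div_mul_right _ _ (Finset.prod_ne_zero_iff.2 (fun j _ => hZ j))

lemma sf_step (hM : M.Valid) (n : Fin M.N) (t : ℕ) (hc : CommonHist M t) (c' : M.C)
    (a : JointA M) (y : JointY M) :
    sfCIB M (t+1) (Fin.snoc hc.1 c', Fin.snoc hc.2.1 a, Fin.snoc hc.2.2 y)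
      = jointSfNext M t y a (sfCIB M t hc) := by
  by_cases hZ : ∀ j : Fin M.N, (∑ τ : Fin (t+1) → M.X j, auxW M hc.2.1 hc.2.2 j τ) ≠ 0
  · funext x'
    have hupd : ∀ k : Fin M.N, sfUpdate M t k (y k) a (sfCIB M t hc) (x' k)
        = (∑ τ : Fin (t+2) → M.X k,
            if τ (Fin.last (t+1)) = x' k
            then auxW M (Fin.snoc hc.2.1 a) (Fin.snoc hc.2.2 y) k τ else 0)
          / (∑ τ : Fin (t+2) → M.X k, auxW M (Fin.snoc hc.2.1 a) (Fin.snoc hc.2.2 y) k τ) := by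
      intro k
      unfold sfUpdate
      have hnum : (∑ v, M.p t k (x' k) v a * M.q t k (y k) v a * marg M (sfCIB M t hc) k v)
          = (∑ v, M.p t k (x' k) v a * M.q t k (y k) v a *
              (∑ τ : Fin (t+1) → M.X k,
                if τ (Fin.last t) = v then auxW M hc.2.1 hc.2.2 k τ else 0))
            / (∑ τ : Fin (t+1) → M.X k, auxW M hc.2.1 hc.2.2 k τ) := by
        rw [Finset.sum_div]
        exact Finset.sum_congr rfl (fun v _ => by
          rw [sf_marg M t hc hZ k v, ← mul_div_assoc])
      have hden : (∑ v, M.q t k (y k) v a * marg M (sfCIB M t hc) k v)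
          = (∑ v, M.q t k (y k) v a *
              (∑ τ : Fin (t+1) → M.X k,
                if τ (Fin.last t) = v then auxW M hc.2.1 hc.2.2 k τ else 0))
            / (∑ τ : Fin (t+1) → M.X k, auxW M hc.2.1 hc.2.2 k τ) := by
        rw [Finset.sum_div]
        exact Finset.sum_congr rfl (fun v _ => by
          rw [sf_marg M t hc hZ k v, ← mul_div_assoc])
      rw [hnum, hden, aux_div_div _ _ _ (hZ k)]
      rw [aux_Num_snoc M hc.2.1 hc.2.2 a y k (x' k), aux_Z_snoc M hM hc.2.1 hc.2.2 a y k]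
    unfold jointSfNext
    rw [Finset.prod_congr rfl (fun k _ => hupd k), Finset.prod_div_distrib]
    rw [sfCIB_eq]
  · push_neg at hZ
    obtain ⟨k0, hk0⟩ := hZ
    have hw : ∀ τ : Fin (t+1) → M.X k0, auxW M hc.2.1 hc.2.2 k0 τ = 0 := by
      have := (Finset.sum_eq_zero_iff_of_nonneg
        (fun τ _ => auxW_nonneg M hM hc.2.1 hc.2.2 k0 τ)).1 hk0
      exact fun τ => this τ (Finset.mem_univ τ)
    have hNum0 : ∀ v : M.X k0,
        (∑ τ : Fin (t+1) → M.X k0,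
          if τ (Fin.last t) = v then auxW M hc.2.1 hc.2.2 k0 τ else 0) = 0 := by
      intro v
      refine Finset.sum_eq_zero (fun τ _ => ?_)
      rw [hw τ]; simp
    have h0 : sfCIB M t hc = fun _ => 0 := by
      funext z
      rw [sfCIB_eq]
      rw [Finset.prod_eq_zero (Finset.mem_univ k0) (hNum0 (z k0)), zero_div]
    have hL : sfCIB M (t+1) (Fin.snoc hc.1 c', Fin.snoc hc.2.1 a, Fin.snoc hc.2.2 y)
        = fun _ => 0 := by
      funext z
      rw [sfCIB_eq]
      rw [Finset.prod_eq_zero (Finset.mem_univ k0) (by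
        rw [aux_Num_snoc M hc.2.1 hc.2.2 a y k0 (z k0)]
        refine Finset.sum_eq_zero (fun v _ => ?_)
        rw [hNum0 v, mul_zero]), zero_div]
    rw [hL, h0]
    funext z
    unfold jointSfNext
    symm
    refine Finset.prod_eq_zero (Finset.mem_univ n) ?_
    unfold sfUpdate
    have hm : ∀ v : M.X n, marg M (fun _ : JointX M => (0:ℝ)) n v = 0 := by
      intro v; unfold marg; simp
    rw [Finset.sum_eq_zero (fun v _ => by rw [hm v, mul_zero]), zero_div]

end Aux5M

section Aux5G

variable (M : Model) (lam : CIBStrat M) (ψ : CIBUpdate M) (n : Fin M.N)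

/-- The CIB-belief triple attached to a common history. -/
def bOf (t : ℕ) (hc : CommonHist M t) : BSpace M :=
  (hc.1 (Fin.last t), gammaPsi M ψ t hc, sfCIB M t hc)

/-- Canonical full trajectory compatible with agent `n`'s private history `h` and a
current joint state `x`. -/
def Fcan {t : ℕ} (h : PrivHist M n t) (x : JointX M) : FullTraj M t :=
  (h.2.1, fun s => Function.update x n (h.1 s), h.2.2.1, h.2.2.2)

/-- Agent `n`'s expected continuation utility, written in reduced form. -/
def Ev (g : Strat M) (k t : ℕ) (h : PrivHist M n t) : ℝ :=
  ∑ x : JointX M,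
    (if x n = h.1 (Fin.last t)
     then ∏ j ∈ Finset.univ.erase n, marg M (gammaPsi M ψ t h.2) j (x j) else 0) *
    contUtil M g n k t (Fcan M n h x)

lemma contUtil_congr (g : Strat M) (hg : ∀ m, m ≠ n → g m = stratOf M lam ψ m)
    (k : ℕ) :
    ∀ (t : ℕ) (f f' : FullTraj M t), f.1 = f'.1 → f.2.2.1 = f'.2.2.1 →
      f.2.2.2 = f'.2.2.2 → (fun s => f.2.1 s n) = (fun s => f'.2.1 s n) →
      f.2.1 (Fin.last t) = f'.2.1 (Fin.last t) →
      contUtil M g n k t f = contUtil M g n k t f' := by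
  induction k with
  | zero => intro t f f' _ _ _ _ _; rfl
  | succ k ih =>
    rintro t ⟨fc, fx, fa, fy⟩ ⟨fc', fx', fa', fy'⟩ h1 h2 h3 h4 h5
    simp only at h1 h2 h3 h4 h5
    subst h1; subst h2; subst h3
    simp only [contUtil]
    refine Finset.sum_congr rfl (fun a _ => ?_)
    have hstrat : ∀ m, g m t (currPriv M (fc, fx, fa, fy) m) (a m)
        = g m t (currPriv M (fc, fx', fa, fy) m) (a m) := by
      intro m
      by_cases hm : m = n
      · subst hm
        simp only [currPriv, commonOf]
        rw [h4]
      · rw [hg m hm]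
        simp only [stratOf, currPriv, commonOf]
        rw [congrFun h5 m]
    have hcont : ∀ (c' : M.C) (x' : JointX M) (y : JointY M),
        contUtil M g n k (t+1) (extendFull M (fc, fx, fa, fy) a y c' x')
          = contUtil M g n k (t+1) (extendFull M (fc, fx', fa, fy) a y c' x') := by
      intro c' x' y
      refine ih (t+1) _ _ rfl rfl rfl ?_ ?_
      · funext s
        induction s using Fin.lastCases with
        | last => simp [extendFull]
        | cast i =>
          simp only [extendFull, Fin.snoc_castSucc]
          exact congrFun h4 i
      · simp [extendFull]
    rw [Finset.prod_congr rfl (fun m _ => hstrat m)]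
    congr 1
    congr 1
    · rw [h5]
    · refine Finset.sum_congr rfl (fun c' _ => Finset.sum_congr rfl (fun x' _ =>
        Finset.sum_congr rfl (fun y _ => ?_)))
      rw [h5, hcont c' x' y]

lemma margTraj_last (μc : ∀ t : ℕ, CommonHist M t → StateTraj M t → ℝ)
    (hmarg : MarginalMatch M ψ μc) (t : ℕ) (hc : CommonHist M t) (j : Fin M.N)
    (xj : M.X j) :
    (∑ τ : Fin (t+1) → M.X j,
        if τ (Fin.last t) = xj then margTraj M (μc t hc) j τ else 0)
      = marg M (gammaPsi M ψ t hc) j xj := by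
  have key : ∀ τ : Fin (t+1) → M.X j,
      (if τ (Fin.last t) = xj then margTraj M (μc t hc) j τ else 0)
        = ∑ ξ : StateTraj M t,
            if (fun s => ξ s j) = τ then (if τ (Fin.last t) = xj then μc t hc ξ else 0)
            else 0 := by
    intro τ
    by_cases hτ : τ (Fin.last t) = xj
    · rw [if_pos hτ]
      unfold margTraj
      exact Finset.sum_congr rfl (fun ξ _ => by rw [if_pos hτ])
    · rw [if_neg hτ]
      symm
      refine Finset.sum_eq_zero (fun ξ _ => ?_)
      rw [if_neg hτ]
      simp
  rw [Finset.sum_congr rfl (fun τ _ => key τ), Finset.sum_comm]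
  rw [← hmarg t hc j xj]
  refine Finset.sum_congr rfl (fun ξ _ => ?_)
  rw [Finset.sum_ite_eq Finset.univ (fun s => ξ s j)
    (fun τ => if τ (Fin.last t) = xj then μc t hc ξ else 0)]
  rw [if_pos (Finset.mem_univ _)]

lemma sumA_eq (μc : ∀ t : ℕ, CommonHist M t → StateTraj M t → ℝ)
    (hmarg : MarginalMatch M ψ μc) (t : ℕ) (h : PrivHist M n t) (x : JointX M) :
    (∑ ξ : StateTraj M t,
        if (fun s => ξ s n) = h.1 ∧ ξ (Fin.last t) = x then
          (∏ j ∈ Finset.univ.erase n, margTraj M (μc t h.2) j (fun s => ξ s j)) else 0)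
      = (if x n = h.1 (Fin.last t)
         then ∏ j ∈ Finset.univ.erase n, marg M (gammaPsi M ψ t h.2) j (x j) else 0) := by
  classical
  set G : ∀ j : Fin M.N, (Fin (t+1) → M.X j) → ℝ := fun j τ =>
    (if τ (Fin.last t) = x j then
        (if hj : j = n then (1:ℝ) else margTraj M (μc t h.2) j τ) else 0)
      * (if hj : j = n then (if (fun s => hj ▸ τ s) = h.1 then (1:ℝ) else 0) else 1)
    with hGdef
  have hG : ∀ ξ : StateTraj M t,
      (if (fun s => ξ s n) = h.1 ∧ ξ (Fin.last t) = x then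
        (∏ j ∈ Finset.univ.erase n, margTraj M (μc t h.2) j (fun s => ξ s j)) else 0)
        = ∏ j, G j (fun s => ξ s j) := by
    intro ξ
    rw [hGdef]
    simp only []
    rw [Finset.prod_mul_distrib]
    have hB : (∏ j, (if hj : j = n then
        (if (fun s => hj ▸ ξ s j) = h.1 then (1:ℝ) else 0) else 1))
        = if (fun s => ξ s n) = h.1 then 1 else 0 := by
      rw [← Finset.mul_prod_erase Finset.univ _ (Finset.mem_univ n)]
      rw [Finset.prod_congr rfl (fun j hj =>
        dif_neg (Finset.ne_of_mem_erase hj)), Finset.prod_const_one, mul_one]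
      rw [dif_pos rfl]
    have hA : (∏ j, (if ξ (Fin.last t) j = x j then
        (if hj : j = n then (1:ℝ) else margTraj M (μc t h.2) j (fun s => ξ s j)) else 0))
        = if ξ (Fin.last t) = x then
            (∏ j ∈ Finset.univ.erase n, margTraj M (μc t h.2) j (fun s => ξ s j)) else 0 := by
      rw [aux_prod_ite (fun j (τ : Fin (t+1) → M.X j) => τ (Fin.last t) = x j)
        (fun j τ => if hj : j = n then (1:ℝ) else margTraj M (μc t h.2) j τ)
        (fun j => fun s => ξ s j)]
      by_cases hx : ξ (Fin.last t) = x
      · rw [if_pos (fun j => congrFun hx j), if_pos hx]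
        rw [← Finset.mul_prod_erase Finset.univ _ (Finset.mem_univ n), dif_pos rfl, one_mul]
        exact Finset.prod_congr rfl (fun j hj => dif_neg (Finset.ne_of_mem_erase hj))
      · rw [if_neg hx, if_neg (fun hall => hx (funext hall))]
    rw [hB, hA]
    by_cases h1 : (fun s => ξ s n) = h.1 <;> by_cases h2 : ξ (Fin.last t) = x <;>
      simp [h1, h2]
  rw [Finset.sum_congr rfl (fun ξ _ => hG ξ), aux_sum_traj_prod G]
  rw [← Finset.mul_prod_erase Finset.univ _ (Finset.mem_univ n)]
  have hGn1 : ∀ τ : Fin (t+1) → M.X n, G n τ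
      = if τ = h.1 then (if τ (Fin.last t) = x n then (1:ℝ) else 0) else 0 := by
    intro τ
    simp only [hGdef, dif_pos rfl]
    by_cases ht : (τ : Fin (t+1) → M.X n) = h.1 <;> by_cases hl : τ (Fin.last t) = x n <;>
      simp [ht, hl]
  have hGn : (∑ τ : Fin (t+1) → M.X n, G n τ)
      = if x n = h.1 (Fin.last t) then 1 else 0 := by
    rw [Finset.sum_congr rfl (fun τ _ => hGn1 τ),
      Finset.sum_ite_eq' Finset.univ h.1
        (fun τ => if τ (Fin.last t) = x n then (1:ℝ) else 0),
      if_pos (Finset.mem_univ _)]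
    by_cases hl : h.1 (Fin.last t) = x n
    · rw [if_pos hl, if_pos hl.symm]
    · rw [if_neg hl, if_neg (fun hh => hl hh.symm)]
  have hGj : ∀ j ∈ Finset.univ.erase n, (∑ τ : Fin (t+1) → M.X j, G j τ)
      = marg M (gammaPsi M ψ t h.2) j (x j) := by
    intro j hj
    have hjn := Finset.ne_of_mem_erase hj
    have hGj1 : ∀ τ : Fin (t+1) → M.X j, G j τ
        = if τ (Fin.last t) = x j then margTraj M (μc t h.2) j τ else 0 := by
      intro τ
      simp only [hGdef, dif_neg hjn, mul_one]
    rw [Finset.sum_congr rfl (fun τ _ => hGj1 τ)]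
    exact margTraj_last M ψ μc hmarg t h.2 j (x j)
  rw [hGn, Finset.prod_congr rfl hGj]
  by_cases hxn : x n = h.1 (Fin.last t) <;> simp [hxn]

lemma expContUtil_eq_Ev (μ : BeliefSys M)
    (μc : ∀ t : ℕ, CommonHist M t → StateTraj M t → ℝ)
    (hprod : ProductForm M μ μc) (hmarg : MarginalMatch M ψ μc)
    (g : Strat M) (hg : ∀ m, m ≠ n → g m = stratOf M lam ψ m)
    (t : ℕ) (h : PrivHist M n t) :
    expContUtil M g μ n t h = Ev M ψ n g (M.T - t) t h := by
  unfold expContUtil Ev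
  have key1 : ∀ ξ : StateTraj M t,
      μ n t h ξ * contUtil M g n (M.T - t) t (h.2.1, ξ, h.2.2.1, h.2.2.2)
        = (if (fun s => ξ s n) = h.1 then
            (∏ j ∈ Finset.univ.erase n, margTraj M (μc t h.2) j (fun s => ξ s j))
              * contUtil M g n (M.T - t) t (Fcan M n h (ξ (Fin.last t)))
           else 0) := by
    intro ξ
    rw [hprod n t h ξ]
    by_cases h1 : (fun s => ξ s n) = h.1
    · have hCT : contUtil M g n (M.T - t) t (h.2.1, ξ, h.2.2.1, h.2.2.2)
          = contUtil M g n (M.T - t) t (Fcan M n h (ξ (Fin.last t))) := by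
        refine contUtil_congr M lam ψ n g hg (M.T - t) t _ _ rfl rfl rfl ?_ ?_
        · funext s
          show ξ s n = Function.update (ξ (Fin.last t)) n (h.1 s) n
          rw [Function.update_self]
          exact congrFun h1 s
        · show ξ (Fin.last t) = Function.update (ξ (Fin.last t)) n (h.1 (Fin.last t))
          rw [← congrFun h1 (Fin.last t), Function.update_eq_self]
      rw [hCT, if_pos h1, if_pos h1, one_mul]
    · rw [if_neg h1, if_neg h1, zero_mul, zero_mul]
  rw [Finset.sum_congr rfl (fun ξ _ => key1 ξ)]
  have key3 : ∀ x : JointX M,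
      (if x n = h.1 (Fin.last t)
        then ∏ j ∈ Finset.univ.erase n, marg M (gammaPsi M ψ t h.2) j (x j) else 0)
        * contUtil M g n (M.T - t) t (Fcan M n h x)
      = ∑ ξ : StateTraj M t,
          if (fun s => ξ s n) = h.1 ∧ ξ (Fin.last t) = x then
            (∏ j ∈ Finset.univ.erase n, margTraj M (μc t h.2) j (fun s => ξ s j))
              * contUtil M g n (M.T - t) t (Fcan M n h x)
          else 0 := by
    intro x
    rw [← sumA_eq M ψ n μc hmarg t h x, Finset.sum_mul]
    refine Finset.sum_congr rfl (fun ξ _ => ?_)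
    by_cases hd : (fun s => ξ s n) = h.1 ∧ ξ (Fin.last t) = x <;> simp [hd]
  rw [Finset.sum_congr rfl (fun x _ => key3 x), Finset.sum_comm]
  refine Finset.sum_congr rfl (fun ξ _ => ?_)
  by_cases h1 : (fun s => ξ s n) = h.1
  · rw [if_pos h1]
    have : ∀ x : JointX M,
        (if (fun s => ξ s n) = h.1 ∧ ξ (Fin.last t) = x then
          (∏ j ∈ Finset.univ.erase n, margTraj M (μc t h.2) j (fun s => ξ s j))
            * contUtil M g n (M.T - t) t (Fcan M n h x)
         else 0)
        = if ξ (Fin.last t) = x then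
            (∏ j ∈ Finset.univ.erase n, margTraj M (μc t h.2) j (fun s => ξ s j))
              * contUtil M g n (M.T - t) t (Fcan M n h x)
          else 0 := by
      intro x
      rw [ite_and, if_pos h1]
    rw [Finset.sum_congr rfl (fun x _ => this x),
      Finset.sum_ite_eq Finset.univ (ξ (Fin.last t))
        (fun x => (∏ j ∈ Finset.univ.erase n, margTraj M (μc t h.2) j (fun s => ξ s j))
          * contUtil M g n (M.T - t) t (Fcan M n h x)),
      if_pos (Finset.mem_univ _)]
  · rw [if_neg h1]
    symm
    refine Finset.sum_eq_zero (fun x _ => ?_)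
    rw [ite_and, if_neg h1]

/-- One-step joint likelihood weight for agent `j`'s CIB update. -/
def Dw (t : ℕ) (b : BSpace M) (j : Fin M.N) (y : JointY M) (a : JointA M) : ℝ :=
  ∑ xj, M.q t j (y j) xj a * lam j t xj b (a j) * marg M b.2.1 j xj

lemma bayes_dw (hlam : IsCIBStrat M lam) (hcons : UpdateConsistent M ψ lam)
    (hM : M.Valid) (t : ℕ) (b : BSpace M) (hb : ∀ (j : Fin M.N) v, 0 ≤ marg M b.2.1 j v)
    (y : JointY M) (a : JointA M) (j : Fin M.N) (v' : M.X j) :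
    (∑ v, (marg M b.2.1 j v * lam j t v b (a j)) * (M.p t j v' v a * M.q t j (y j) v a))
      = Dw M lam t b j y a * ψ j t (y j) a b v' := by
  have hD0 : ∀ v, 0 ≤ M.q t j (y j) v a * lam j t v b (a j) * marg M b.2.1 j v :=
    fun v => mul_nonneg (mul_nonneg (hM.2.2.2.2.2.2.2.2.1 t j (y j) v a)
      ((hlam j t v b).1 (a j))) (hb j v)
  rcases lt_or_eq_of_le (Finset.sum_nonneg (fun v _ => hD0 v)) with hD | hD
  · rw [(hcons j t (y j) a b).1 hD v']
    unfold Dw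
    rw [mul_div_cancel₀ _ (ne_of_gt hD)]
    exact Finset.sum_congr rfl (fun v _ => by ring)
  · have hz := (Finset.sum_eq_zero_iff_of_nonneg (fun v _ => hD0 v)).1 hD.symm
    have hL : (∑ v, (marg M b.2.1 j v * lam j t v b (a j))
        * (M.p t j v' v a * M.q t j (y j) v a)) = 0 := by
      refine Finset.sum_eq_zero (fun v _ => ?_)
      have : (marg M b.2.1 j v * lam j t v b (a j)) * (M.p t j v' v a * M.q t j (y j) v a)
          = M.p t j v' v a * (M.q t j (y j) v a * lam j t v b (a j) * marg M b.2.1 j v) := by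
        ring
      rw [this, hz v (Finset.mem_univ v), mul_zero]
    rw [hL]
    unfold Dw
    rw [← hD, zero_mul]

/-- stage payoff functional -/
def QQgen (t : ℕ) (b : BSpace M) (xn : M.X n) (an : M.A n)
    (V : M.X n → M.C → JointA M → JointY M → ℝ) : ℝ :=
  ∑ a : JointA M, (if a n = an then (1:ℝ) else 0) *
    ((∑ x : JointX M,
        (if x n = xn then
          ∏ j ∈ Finset.univ.erase n, (marg M b.2.1 j (x j) * lam j t (x j) b (a j))
         else 0) * M.util t n b.1 x a)
    + ∑ c' : M.C, ∑ y : JointY M,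
        M.pC t c' b.1 a * (∏ j ∈ Finset.univ.erase n, Dw M lam t b j y a)
          * M.q t n (y n) xn a
          * ∑ x'n : M.X n, M.p t n x'n xn a * V x'n c' a y)

lemma inner_x (hM : M.Valid) (hlam : IsCIBStrat M lam) (hcons : UpdateConsistent M ψ lam)
    (t : ℕ) (b : BSpace M) (hb : ∀ (j : Fin M.N) v, 0 ≤ marg M b.2.1 j v)
    (a : JointA M) (x' : JointX M) (y' : JointY M) (xn : M.X n) :
    (∑ x : JointX M, if x n = xn then
        (∏ j ∈ Finset.univ.erase n, marg M b.2.1 j (x j)) *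
        (∏ m ∈ Finset.univ.erase n, lam m t (x m) b (a m)) *
        ((∏ m, M.p t m (x' m) (x m) a) * (∏ m, M.q t m (y' m) (x m) a))
      else 0)
    = (M.p t n (x' n) xn a * M.q t n (y' n) xn a) *
        ∏ j ∈ Finset.univ.erase n,
          (Dw M lam t b j y' a * ψ j t (y' j) a b (x' j)) := by
  classical
  have e4 : ∀ x : JointX M,
      (if x n = xn then
        (∏ j ∈ Finset.univ.erase n, marg M b.2.1 j (x j)) *
        (∏ m ∈ Finset.univ.erase n, lam m t (x m) b (a m)) *
        ((∏ m, M.p t m (x' m) (x m) a) * (∏ m, M.q t m (y' m) (x m) a))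
       else 0)
      = if x n = xn then
          ∏ j, ((if hj : j = n then (1:ℝ)
                 else marg M b.2.1 j (x j) * lam j t (x j) b (a j)) *
                (M.p t j (x' j) (x j) a * M.q t j (y' j) (x j) a))
        else 0 := by
    intro x
    by_cases hx : x n = xn
    · rw [if_pos hx, if_pos hx, Finset.prod_mul_distrib]
      have h5 : (∏ j, (if hj : j = n then (1:ℝ)
          else marg M b.2.1 j (x j) * lam j t (x j) b (a j)))
          = ∏ j ∈ Finset.univ.erase n, (marg M b.2.1 j (x j) * lam j t (x j) b (a j)) := by
        rw [← Finset.mul_prod_erase Finset.univ _ (Finset.mem_univ n), dif_pos rfl, one_mul]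
        exact Finset.prod_congr rfl fun j hj => dif_neg (Finset.ne_of_mem_erase hj)
      rw [h5, Finset.prod_mul_distrib, Finset.prod_mul_distrib]
    · rw [if_neg hx, if_neg hx]
  rw [Finset.sum_congr rfl (fun x _ => e4 x),
    aux_sum_pi_split n xn (fun j v =>
      (if hj : j = n then (1:ℝ) else marg M b.2.1 j v * lam j t v b (a j)) *
      (M.p t j (x' j) v a * M.q t j (y' j) v a))]
  rw [dif_pos rfl, one_mul]
  congr 1
  refine Finset.prod_congr rfl fun j hj => ?_
  have hjn := Finset.ne_of_mem_erase hj
  rw [Finset.sum_congr rfl (fun v _ => by rw [dif_neg hjn]),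
    bayes_dw M lam ψ hlam hcons hM t b hb y' a j (x' j)]

lemma aux_an_collapse {JA A : Type} [Fintype JA] [Fintype A] [DecidableEq A]
    (keyA : JA → A) (gw : A → ℝ) (S : JA → ℝ) :
    (∑ an, gw an * ∑ a, (if keyA a = an then (1:ℝ) else 0) * S a)
      = ∑ a, gw (keyA a) * S a := by
  have h1 : ∀ an, gw an * ∑ a, (if keyA a = an then (1:ℝ) else 0) * S a
      = ∑ a, if keyA a = an then gw an * S a else 0 := by
    intro an
    rw [Finset.mul_sum]
    exact Finset.sum_congr rfl fun a _ => by by_cases hk : keyA a = an <;> simp [hk]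
  rw [Finset.sum_congr rfl (fun an _ => h1 an), Finset.sum_comm]
  refine Finset.sum_congr rfl fun a _ => ?_
  rw [Finset.sum_ite_eq Finset.univ (keyA a) (fun an => gw an * S a),
    if_pos (Finset.mem_univ _)]

lemma step_eq (hM : M.Valid) (hlam : IsCIBStrat M lam) (hψ : IsCIBUpdate M ψ)
    (hcons : UpdateConsistent M ψ lam)
    (g : Strat M) (hg : ∀ m, m ≠ n → g m = stratOf M lam ψ m)
    (k t : ℕ) (h : PrivHist M n t) :
    Ev M ψ n g (k+1) t h
      = ∑ an : M.A n, g n t h an *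
          QQgen M lam n t (bOf M ψ t h.2) (h.1 (Fin.last t)) an
            (fun x'n c' a y => Ev M ψ n g k (t+1) (extendPriv M h x'n c' a y)) := by
  classical
  have hbnn : ∀ (j : Fin M.N) v, 0 ≤ marg M (bOf M ψ t h.2).2.1 j v := by
    intro j v
    exact marg_nonneg M _ (gammaPsi_nonneg M ψ hM hψ t h.2) j v
  -- RHS collapse over an
  rw [show (∑ an : M.A n, g n t h an *
      QQgen M lam n t (bOf M ψ t h.2) (h.1 (Fin.last t)) an
        (fun x'n c' a y => Ev M ψ n g k (t+1) (extendPriv M h x'n c' a y)))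
    = ∑ a : JointA M, g n t h (a n) *
        ((∑ x : JointX M,
            (if x n = h.1 (Fin.last t) then
              ∏ j ∈ Finset.univ.erase n,
                (marg M (bOf M ψ t h.2).2.1 j (x j) *
                  lam j t (x j) (bOf M ψ t h.2) (a j))
             else 0) * M.util t n (bOf M ψ t h.2).1 x a)
        + ∑ c' : M.C, ∑ y : JointY M,
            M.pC t c' (bOf M ψ t h.2).1 a *
              (∏ j ∈ Finset.univ.erase n, Dw M lam t (bOf M ψ t h.2) j y a)
              * M.q t n (y n) (h.1 (Fin.last t)) a
              * ∑ x'n : M.X n, M.p t n x'n (h.1 (Fin.last t)) a *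
                  Ev M ψ n g k (t+1) (extendPriv M h x'n c' a y))
    from aux_an_collapse (fun a : JointA M => a n) (g n t h) _]
  -- per-x canonical expansion of contUtil
  have hcurn : ∀ x : JointX M, currPriv M (Fcan M n h x) n = h := by
    intro x
    exact congrArg₂ Prod.mk (funext fun s => Function.update_self n (h.1 s) x) rfl
  have hlast : ∀ x : JointX M, x n = h.1 (Fin.last t) →
      (Fcan M n h x).2.1 (Fin.last t) = x := by
    intro x hx
    show Function.update x n (h.1 (Fin.last t)) = x
    rw [← hx, Function.update_eq_self]
  have hstratm : ∀ (x : JointX M) (m : Fin M.N), m ≠ n → ∀ (v : M.A m),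
      g m t (currPriv M (Fcan M n h x) m) v = lam m t (x m) (bOf M ψ t h.2) v := by
    intro x m hm v
    rw [hg m hm]
    show lam m t (Function.update x n (h.1 (Fin.last t)) m) (bOf M ψ t h.2) v = _
    rw [Function.update_of_ne hm]
  have hcont : ∀ (x : JointX M) (a : JointA M) (c' : M.C) (x' : JointX M) (y' : JointY M),
      contUtil M g n k (t+1) (extendFull M (Fcan M n h x) a y' c' x')
        = contUtil M g n k (t+1) (Fcan M n (extendPriv M h (x' n) c' a y') x') := by
    intro x a c' x' y'
    refine contUtil_congr M lam ψ n g hg k (t+1) _ _ rfl rfl rfl ?_ ?_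
    · funext s
      simp only [extendFull, Fcan, extendPriv]
      rw [Function.update_self]
      induction s using Fin.lastCases with
      | last => rw [Fin.snoc_last, Fin.snoc_last]
      | cast i => rw [Fin.snoc_castSucc, Fin.snoc_castSucc, Function.update_self]
    · simp only [extendFull, Fcan, extendPriv]
      rw [Fin.snoc_last, Fin.snoc_last, Function.update_eq_self]
  have phase1 : ∀ x : JointX M, x n = h.1 (Fin.last t) →
      contUtil M g n (k+1) t (Fcan M n h x)
        = ∑ a : JointA M,
            (g n t h (a n) *
              ∏ m ∈ Finset.univ.erase n, lam m t (x m) (bOf M ψ t h.2) (a m)) *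
            (M.util t n (bOf M ψ t h.2).1 x a +
              ∑ c' : M.C, ∑ x' : JointX M, ∑ y : JointY M,
                M.pC t c' (bOf M ψ t h.2).1 a * (∏ m, M.p t m (x' m) (x m) a) *
                (∏ m, M.q t m (y m) (x m) a) *
                contUtil M g n k (t+1) (Fcan M n (extendPriv M h (x' n) c' a y) x')) := by
    intro x hx
    simp only [contUtil]
    refine Finset.sum_congr rfl (fun a _ => ?_)
    have hW : (∏ m, g m t (currPriv M (Fcan M n h x) m) (a m))
        = g n t h (a n) *
            ∏ m ∈ Finset.univ.erase n, lam m t (x m) (bOf M ψ t h.2) (a m) := by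
      rw [← Finset.mul_prod_erase Finset.univ _ (Finset.mem_univ n), hcurn x]
      congr 1
      exact Finset.prod_congr rfl
        (fun m hm => hstratm x m (Finset.ne_of_mem_erase hm) (a m))
    rw [hW, hlast x hx]
    refine congrArg₂ _ rfl (congrArg₂ _ rfl ?_)
    refine Finset.sum_congr rfl fun c' _ => Finset.sum_congr rfl fun x' _ =>
      Finset.sum_congr rfl fun y' _ => ?_
    rw [hcont x a c' x' y']
    exact rfl
  unfold Ev
  have step1 : ∀ x : JointX M,
      (if x n = h.1 (Fin.last t)
        then ∏ j ∈ Finset.univ.erase n, marg M (gammaPsi M ψ t h.2) j (x j) else 0) *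
        contUtil M g n (k+1) t (Fcan M n h x)
      = ∑ a : JointA M,
          (if x n = h.1 (Fin.last t) then
            (∏ j ∈ Finset.univ.erase n, marg M (bOf M ψ t h.2).2.1 j (x j)) *
            ((g n t h (a n) *
                ∏ m ∈ Finset.univ.erase n, lam m t (x m) (bOf M ψ t h.2) (a m)) *
              (M.util t n (bOf M ψ t h.2).1 x a +
                ∑ c' : M.C, ∑ x' : JointX M, ∑ y : JointY M,
                  M.pC t c' (bOf M ψ t h.2).1 a * (∏ m, M.p t m (x' m) (x m) a) *
                  (∏ m, M.q t m (y m) (x m) a) *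
                  contUtil M g n k (t+1) (Fcan M n (extendPriv M h (x' n) c' a y) x')))
           else 0) := by
    intro x
    by_cases hx : x n = h.1 (Fin.last t)
    · rw [if_pos hx, phase1 x hx, Finset.mul_sum]
      refine Finset.sum_congr rfl fun a _ => ?_
      rw [if_pos hx]
      rfl
    · rw [if_neg hx, zero_mul]
      symm
      exact Finset.sum_eq_zero fun a _ => if_neg hx
  rw [Finset.sum_congr rfl (fun x _ => step1 x), Finset.sum_comm]
  refine Finset.sum_congr rfl fun a _ => ?_
  have e2 : ∀ x : JointX M,
      (if x n = h.1 (Fin.last t) then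
        (∏ j ∈ Finset.univ.erase n, marg M (bOf M ψ t h.2).2.1 j (x j)) *
        ((g n t h (a n) *
            ∏ m ∈ Finset.univ.erase n, lam m t (x m) (bOf M ψ t h.2) (a m)) *
          (M.util t n (bOf M ψ t h.2).1 x a +
            ∑ c' : M.C, ∑ x' : JointX M, ∑ y : JointY M,
              M.pC t c' (bOf M ψ t h.2).1 a * (∏ m, M.p t m (x' m) (x m) a) *
              (∏ m, M.q t m (y m) (x m) a) *
              contUtil M g n k (t+1) (Fcan M n (extendPriv M h (x' n) c' a y) x')))
       else 0)
      = g n t h (a n) *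
          ((if x n = h.1 (Fin.last t) then
              (∏ j ∈ Finset.univ.erase n, marg M (bOf M ψ t h.2).2.1 j (x j)) *
              (∏ m ∈ Finset.univ.erase n, lam m t (x m) (bOf M ψ t h.2) (a m)) *
              M.util t n (bOf M ψ t h.2).1 x a
             else 0)
          + (if x n = h.1 (Fin.last t) then
              (∏ j ∈ Finset.univ.erase n, marg M (bOf M ψ t h.2).2.1 j (x j)) *
              (∏ m ∈ Finset.univ.erase n, lam m t (x m) (bOf M ψ t h.2) (a m)) *
              (∑ c' : M.C, ∑ x' : JointX M, ∑ y : JointY M,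
                M.pC t c' (bOf M ψ t h.2).1 a * (∏ m, M.p t m (x' m) (x m) a) *
                (∏ m, M.q t m (y m) (x m) a) *
                contUtil M g n k (t+1) (Fcan M n (extendPriv M h (x' n) c' a y) x'))
             else 0)) := by
    intro x
    by_cases hx : x n = h.1 (Fin.last t)
    · rw [if_pos hx, if_pos hx, if_pos hx]
      ring
    · rw [if_neg hx, if_neg hx, if_neg hx]
      ring
  rw [Finset.sum_congr rfl (fun x _ => e2 x), ← Finset.mul_sum, Finset.sum_add_distrib]
  congr 1
  congr 1
  · refine Finset.sum_congr rfl fun x _ => ?_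
    by_cases hx : x n = h.1 (Fin.last t)
    · rw [if_pos hx, if_pos hx, Finset.prod_mul_distrib]
    · rw [if_neg hx, if_neg hx, zero_mul]
  · have e3 : ∀ x : JointX M,
        (if x n = h.1 (Fin.last t) then
          (∏ j ∈ Finset.univ.erase n, marg M (bOf M ψ t h.2).2.1 j (x j)) *
          (∏ m ∈ Finset.univ.erase n, lam m t (x m) (bOf M ψ t h.2) (a m)) *
          (∑ c' : M.C, ∑ x' : JointX M, ∑ y : JointY M,
            M.pC t c' (bOf M ψ t h.2).1 a * (∏ m, M.p t m (x' m) (x m) a) *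
            (∏ m, M.q t m (y m) (x m) a) *
            contUtil M g n k (t+1) (Fcan M n (extendPriv M h (x' n) c' a y) x'))
         else 0)
        = ∑ c' : M.C, ∑ x' : JointX M, ∑ y : JointY M,
            (if x n = h.1 (Fin.last t) then
              (∏ j ∈ Finset.univ.erase n, marg M (bOf M ψ t h.2).2.1 j (x j)) *
              (∏ m ∈ Finset.univ.erase n, lam m t (x m) (bOf M ψ t h.2) (a m)) *
              (M.pC t c' (bOf M ψ t h.2).1 a * (∏ m, M.p t m (x' m) (x m) a) *
               (∏ m, M.q t m (y m) (x m) a) *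
               contUtil M g n k (t+1) (Fcan M n (extendPriv M h (x' n) c' a y) x'))
             else 0) := by
      intro x
      by_cases hx : x n = h.1 (Fin.last t)
      · rw [if_pos hx, Finset.mul_sum]
        refine Finset.sum_congr rfl fun c' _ => ?_
        rw [Finset.mul_sum]
        refine Finset.sum_congr rfl fun x' _ => ?_
        rw [Finset.mul_sum]
        refine Finset.sum_congr rfl fun y' _ => ?_
        rw [if_pos hx]
      · rw [if_neg hx]
        symm
        exact Finset.sum_eq_zero fun c' _ => Finset.sum_eq_zero fun x' _ =>
          Finset.sum_eq_zero fun y' _ => if_neg hx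
    rw [Finset.sum_congr rfl (fun x _ => e3 x), Finset.sum_comm]
    refine Finset.sum_congr rfl fun c' _ => ?_
    rw [Finset.sum_comm]
    rw [Finset.sum_congr rfl (fun x' (_ : x' ∈ Finset.univ) => Finset.sum_comm), Finset.sum_comm]
    refine Finset.sum_congr rfl fun y' _ => ?_
    have e5 : ∀ x' : JointX M,
        (∑ x : JointX M, if x n = h.1 (Fin.last t) then
          (∏ j ∈ Finset.univ.erase n, marg M (bOf M ψ t h.2).2.1 j (x j)) *
          (∏ m ∈ Finset.univ.erase n, lam m t (x m) (bOf M ψ t h.2) (a m)) *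
          (M.pC t c' (bOf M ψ t h.2).1 a * (∏ m, M.p t m (x' m) (x m) a) *
           (∏ m, M.q t m (y' m) (x m) a) *
           contUtil M g n k (t+1) (Fcan M n (extendPriv M h (x' n) c' a y') x'))
         else 0)
        = (M.pC t c' (bOf M ψ t h.2).1 a *
            (∏ j ∈ Finset.univ.erase n, Dw M lam t (bOf M ψ t h.2) j y' a) *
            M.q t n (y' n) (h.1 (Fin.last t)) a) *
          (M.p t n (x' n) (h.1 (Fin.last t)) a *
            ((∏ j ∈ Finset.univ.erase n, ψ j t (y' j) a (bOf M ψ t h.2) (x' j)) *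
              contUtil M g n k (t+1) (Fcan M n (extendPriv M h (x' n) c' a y') x'))) := by
      intro x'
      have e6 : ∀ x : JointX M,
          (if x n = h.1 (Fin.last t) then
            (∏ j ∈ Finset.univ.erase n, marg M (bOf M ψ t h.2).2.1 j (x j)) *
            (∏ m ∈ Finset.univ.erase n, lam m t (x m) (bOf M ψ t h.2) (a m)) *
            (M.pC t c' (bOf M ψ t h.2).1 a * (∏ m, M.p t m (x' m) (x m) a) *
             (∏ m, M.q t m (y' m) (x m) a) *
             contUtil M g n k (t+1) (Fcan M n (extendPriv M h (x' n) c' a y') x'))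
           else 0)
          = (if x n = h.1 (Fin.last t) then
              (∏ j ∈ Finset.univ.erase n, marg M (bOf M ψ t h.2).2.1 j (x j)) *
              (∏ m ∈ Finset.univ.erase n, lam m t (x m) (bOf M ψ t h.2) (a m)) *
              ((∏ m, M.p t m (x' m) (x m) a) * (∏ m, M.q t m (y' m) (x m) a))
             else 0) *
            (M.pC t c' (bOf M ψ t h.2).1 a *
              contUtil M g n k (t+1) (Fcan M n (extendPriv M h (x' n) c' a y') x')) := by
        intro x
        by_cases hx : x n = h.1 (Fin.last t)
        · rw [if_pos hx, if_pos hx]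
          ring
        · rw [if_neg hx, if_neg hx, zero_mul]
      rw [Finset.sum_congr rfl (fun x _ => e6 x), ← Finset.sum_mul,
        inner_x M lam ψ n hM hlam hcons t (bOf M ψ t h.2) hbnn a x' y' (h.1 (Fin.last t)),
        Finset.prod_mul_distrib]
      ring
    rw [Finset.sum_congr rfl (fun x' _ => e5 x'), ← Finset.mul_sum]
    rw [aux_fiber (fun x' : JointX M => x' n)
      (fun x' => (∏ j ∈ Finset.univ.erase n, ψ j t (y' j) a (bOf M ψ t h.2) (x' j)) *
        contUtil M g n k (t+1) (Fcan M n (extendPriv M h (x' n) c' a y') x'))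
      (fun v => M.p t n v (h.1 (Fin.last t)) a)]
    refine congrArg _ (Finset.sum_congr rfl fun v' _ => ?_)
    refine congrArg _ ?_
    have hlast' : (extendPriv M h v' c' a y').1 (Fin.last (t+1)) = v' := by
      show (Fin.snoc h.1 v' : Fin (t+2) → M.X n) (Fin.last (t+1)) = v'
      exact Fin.snoc_last _ _
    have e4' : gammaPsi M ψ (t+1) (extendPriv M h v' c' a y').2
        = jointPsiNext M ψ t y' a (bOf M ψ t h.2) := by
      rw [show (extendPriv M h v' c' a y').2
          = (Fin.snoc h.2.1 c', Fin.snoc h.2.2.1 a, Fin.snoc h.2.2.2 y') from rfl,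
        gammaPsi_snoc M ψ t h.2 c' a y']
      rfl
    show _ = Ev M ψ n g k (t+1) (extendPriv M h v' c' a y')
    unfold Ev
    rw [hlast']
    refine Finset.sum_congr rfl fun x' _ => ?_
    by_cases hx' : x' n = v'
    · rw [if_pos hx', if_pos hx', hx']
      congr 1
      refine Finset.prod_congr rfl fun j _ => ?_
      rw [e4', marg_jointPsiNext M ψ hψ t y' a (bOf M ψ t h.2) j (x' j)]
    · rw [if_neg hx', if_neg hx', zero_mul]


/-- Backward-induction value function for agent `n`. -/
noncomputable def VnAux (neA : Nonempty (M.A n)) : ℕ → ℕ → M.X n → BSpace M → ℝ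
  | 0, _, _, _ => 0
  | (k+1), t, xn, b =>
    Finset.univ.sup' (Finset.univ_nonempty_iff.mpr neA)
      (fun an => QQgen M lam n t b xn an
        (fun x'n c' a y => VnAux neA k (t+1) x'n
          (c', jointPsiNext M ψ t y a b, jointSfNext M t y a b.2.2)))

lemma Dw_nonneg (hM : M.Valid) (hlam : IsCIBStrat M lam) (t : ℕ) (b : BSpace M)
    (hb : ∀ (j : Fin M.N) v, 0 ≤ marg M b.2.1 j v) (j : Fin M.N) (y : JointY M)
    (a : JointA M) : 0 ≤ Dw M lam t b j y a :=
  Finset.sum_nonneg fun v _ => mul_nonneg (mul_nonneg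
    (hM.2.2.2.2.2.2.2.2.1 t j (y j) v a) ((hlam j t v b).1 (a j))) (hb j v)

lemma QQgen_mono (hM : M.Valid) (hlam : IsCIBStrat M lam) (t : ℕ) (b : BSpace M)
    (hb : ∀ (j : Fin M.N) v, 0 ≤ marg M b.2.1 j v) (xn : M.X n) (an : M.A n)
    (V W : M.X n → M.C → JointA M → JointY M → ℝ)
    (hVW : ∀ x'n c' a y, V x'n c' a y ≤ W x'n c' a y) :
    QQgen M lam n t b xn an V ≤ QQgen M lam n t b xn an W := by
  unfold QQgen
  refine Finset.sum_le_sum fun a _ => ?_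
  refine mul_le_mul_of_nonneg_left ?_ (by
    by_cases hc : a n = an
    · rw [if_pos hc]; norm_num
    · rw [if_neg hc])
  refine add_le_add le_rfl ?_
  refine Finset.sum_le_sum fun c' _ => Finset.sum_le_sum fun y _ => ?_
  refine mul_le_mul_of_nonneg_left ?_ ?_
  · exact Finset.sum_le_sum fun x'n _ => mul_le_mul_of_nonneg_left (hVW x'n c' a y)
      (hM.2.2.2.2.2.2.1 t n x'n xn a)
  · exact mul_nonneg (mul_nonneg (hM.2.2.2.2.1 t c' b.1 a)
      (Finset.prod_nonneg fun j _ => Dw_nonneg M lam hM hlam t b hb j y a))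
      (hM.2.2.2.2.2.2.2.2.1 t n (y n) xn a)

lemma bOf_snoc (hM : M.Valid) (t : ℕ) (h : PrivHist M n t) (x'n : M.X n) (c' : M.C)
    (a : JointA M) (y : JointY M) :
    bOf M ψ (t+1) (extendPriv M h x'n c' a y).2
      = (c', jointPsiNext M ψ t y a (bOf M ψ t h.2),
          jointSfNext M t y a (bOf M ψ t h.2).2.2) := by
  unfold bOf
  refine congrArg₂ Prod.mk ?_ (congrArg₂ Prod.mk ?_ ?_)
  · show (Fin.snoc h.2.1 c' : Fin (t+2) → M.C) (Fin.last (t+1)) = c'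
    exact Fin.snoc_last _ _
  · show gammaPsi M ψ (t+1) (Fin.snoc h.2.1 c', Fin.snoc h.2.2.1 a, Fin.snoc h.2.2.2 y) = _
    rw [gammaPsi_snoc M ψ t h.2 c' a y]
  · show sfCIB M (t+1) (Fin.snoc h.2.1 c', Fin.snoc h.2.2.1 a, Fin.snoc h.2.2.2 y) = _
    rw [sf_step M hM n t h.2 c' a y]

lemma extendPriv_last (t : ℕ) (h : PrivHist M n t) (x'n : M.X n) (c' : M.C)
    (a : JointA M) (y : JointY M) :
    (extendPriv M h x'n c' a y).1 (Fin.last (t+1)) = x'n := by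
  show (Fin.snoc h.1 x'n : Fin (t+2) → M.X n) (Fin.last (t+1)) = x'n
  exact Fin.snoc_last _ _

lemma Ev_le_Vn (hM : M.Valid) (hlam : IsCIBStrat M lam) (hψ : IsCIBUpdate M ψ)
    (hcons : UpdateConsistent M ψ lam) (neA : Nonempty (M.A n)) :
    ∀ (k t : ℕ) (h : PrivHist M n t) (g : Strat M), IsStrat M g →
      (∀ m, m ≠ n → g m = stratOf M lam ψ m) →
      Ev M ψ n g k t h ≤ VnAux M lam ψ n neA k t (h.1 (Fin.last t)) (bOf M ψ t h.2) := by
  intro k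
  induction k with
  | zero =>
    intro t h g _ _
    unfold Ev
    refine le_of_eq ?_
    rw [Finset.sum_eq_zero fun x _ => by rw [show contUtil M g n 0 t (Fcan M n h x) = 0
      from rfl, mul_zero]]
    rfl
  | succ k ih =>
    intro t h g hgs hg
    have hbnn : ∀ (j : Fin M.N) v, 0 ≤ marg M (bOf M ψ t h.2).2.1 j v := fun j v =>
      marg_nonneg M _ (gammaPsi_nonneg M ψ hM hψ t h.2) j v
    rw [step_eq M lam ψ n hM hlam hψ hcons g hg k t h]
    have hQ : ∀ an : M.A n, QQgen M lam n t (bOf M ψ t h.2) (h.1 (Fin.last t)) an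
        (fun x'n c' a y => Ev M ψ n g k (t+1) (extendPriv M h x'n c' a y))
        ≤ VnAux M lam ψ n neA (k+1) t (h.1 (Fin.last t)) (bOf M ψ t h.2) := by
      intro an
      have h1 : QQgen M lam n t (bOf M ψ t h.2) (h.1 (Fin.last t)) an
          (fun x'n c' a y => Ev M ψ n g k (t+1) (extendPriv M h x'n c' a y))
          ≤ QQgen M lam n t (bOf M ψ t h.2) (h.1 (Fin.last t)) an
            (fun x'n c' a y => VnAux M lam ψ n neA k (t+1) x'n
              (c', jointPsiNext M ψ t y a (bOf M ψ t h.2),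
                jointSfNext M t y a (bOf M ψ t h.2).2.2)) := by
        refine QQgen_mono M lam n hM hlam t (bOf M ψ t h.2) hbnn _ an _ _ ?_
        intro x'n c' a y
        have h2 := ih (t+1) (extendPriv M h x'n c' a y) g hgs hg
        rw [extendPriv_last M n t h x'n c' a y, bOf_snoc M ψ n hM t h x'n c' a y] at h2
        exact h2
      refine le_trans h1 ?_
      have hunf : VnAux M lam ψ n neA (k+1) t (h.1 (Fin.last t)) (bOf M ψ t h.2)
          = Finset.univ.sup' (Finset.univ_nonempty_iff.mpr neA)
            (fun an => QQgen M lam n t (bOf M ψ t h.2) (h.1 (Fin.last t)) an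
              (fun x'n c' a y => VnAux M lam ψ n neA k (t+1) x'n
                (c', jointPsiNext M ψ t y a (bOf M ψ t h.2),
                  jointSfNext M t y a (bOf M ψ t h.2).2.2))) := rfl
      rw [hunf]
      exact Finset.le_sup'
        (fun an => QQgen M lam n t (bOf M ψ t h.2) (h.1 (Fin.last t)) an
          (fun x'n c' a y => VnAux M lam ψ n neA k (t+1) x'n
            (c', jointPsiNext M ψ t y a (bOf M ψ t h.2),
              jointSfNext M t y a (bOf M ψ t h.2).2.2)))
        (Finset.mem_univ an)
    calc (∑ an : M.A n, g n t h an * QQgen M lam n t (bOf M ψ t h.2) (h.1 (Fin.last t)) an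
            (fun x'n c' a y => Ev M ψ n g k (t+1) (extendPriv M h x'n c' a y)))
        ≤ ∑ an : M.A n, g n t h an *
            VnAux M lam ψ n neA (k+1) t (h.1 (Fin.last t)) (bOf M ψ t h.2) := by
          exact Finset.sum_le_sum fun an _ =>
            mul_le_mul_of_nonneg_left (hQ an) ((hgs n t h).1 an)
      _ = VnAux M lam ψ n neA (k+1) t (h.1 (Fin.last t)) (bOf M ψ t h.2) := by
          rw [← Finset.sum_mul, (hgs n t h).2, one_mul]

/-- The greedy maximizer of the stage problem. -/
noncomputable def astar (neA : Nonempty (M.A n)) (t : ℕ) (xn : M.X n) (b : BSpace M) :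
    M.A n :=
  Classical.choose (Finset.exists_mem_eq_sup' (Finset.univ_nonempty_iff.mpr neA)
    (fun an => QQgen M lam n t b xn an
      (fun x'n c' a y => VnAux M lam ψ n neA (M.T - t - 1) (t+1) x'n
        (c', jointPsiNext M ψ t y a b, jointSfNext M t y a b.2.2))))

lemma astar_spec (neA : Nonempty (M.A n)) (t : ℕ) (xn : M.X n) (b : BSpace M) :
    Finset.univ.sup' (Finset.univ_nonempty_iff.mpr neA)
      (fun an => QQgen M lam n t b xn an
        (fun x'n c' a y => VnAux M lam ψ n neA (M.T - t - 1) (t+1) x'n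
          (c', jointPsiNext M ψ t y a b, jointSfNext M t y a b.2.2)))
      = QQgen M lam n t b xn (astar M lam ψ n neA t xn b)
          (fun x'n c' a y => VnAux M lam ψ n neA (M.T - t - 1) (t+1) x'n
            (c', jointPsiNext M ψ t y a b, jointSfNext M t y a b.2.2)) :=
  (Classical.choose_spec (Finset.exists_mem_eq_sup' (Finset.univ_nonempty_iff.mpr neA)
    (fun an => QQgen M lam n t b xn an
      (fun x'n c' a y => VnAux M lam ψ n neA (M.T - t - 1) (t+1) x'n
        (c', jointPsiNext M ψ t y a b, jointSfNext M t y a b.2.2))))).2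

/-- The optimal CIB strategy of agent `n`. -/
noncomputable def lamOpt (neA : Nonempty (M.A n)) (t : ℕ) (xn : M.X n) (b : BSpace M)
    (an : M.A n) : ℝ :=
  if an = astar M lam ψ n neA t xn b then 1 else 0

/-- The induced behavioral strategy profile. -/
noncomputable def gOpt (neA : Nonempty (M.A n)) : Strat M :=
  Function.update (stratOf M lam ψ) n
    (fun t h' a => lamOpt M lam ψ n neA t (h'.1 (Fin.last t)) (bOf M ψ t h'.2) a)

lemma gOpt_ne (neA : Nonempty (M.A n)) (m : Fin M.N) (hm : m ≠ n) :
    gOpt M lam ψ n neA m = stratOf M lam ψ m :=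
  Function.update_of_ne hm _ _

lemma gOpt_n (neA : Nonempty (M.A n)) :
    gOpt M lam ψ n neA n
      = fun t h' a => lamOpt M lam ψ n neA t (h'.1 (Fin.last t)) (bOf M ψ t h'.2) a :=
  Function.update_self _ _ _

lemma Ev_opt (hM : M.Valid) (hlam : IsCIBStrat M lam) (hψ : IsCIBUpdate M ψ)
    (hcons : UpdateConsistent M ψ lam) (neA : Nonempty (M.A n)) :
    ∀ (k t : ℕ), M.T - t = k → ∀ (h : PrivHist M n t),
      Ev M ψ n (gOpt M lam ψ n neA) k t h
        = VnAux M lam ψ n neA k t (h.1 (Fin.last t)) (bOf M ψ t h.2) := by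
  intro k
  induction k with
  | zero =>
    intro t _ h
    unfold Ev
    rw [Finset.sum_eq_zero fun x _ => by
      rw [show contUtil M (gOpt M lam ψ n neA) n 0 t (Fcan M n h x) = 0 from rfl, mul_zero]]
    rfl
  | succ k ih =>
    intro t hT h
    have hk : k = M.T - t - 1 := by omega
    rw [step_eq M lam ψ n hM hlam hψ hcons (gOpt M lam ψ n neA)
      (gOpt_ne M lam ψ n neA) k t h]
    have hVn : ∀ (x'n : M.X n) (c' : M.C) (a : JointA M) (y : JointY M),
        Ev M ψ n (gOpt M lam ψ n neA) k (t+1) (extendPriv M h x'n c' a y)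
          = VnAux M lam ψ n neA k (t+1) x'n
              (c', jointPsiNext M ψ t y a (bOf M ψ t h.2),
                jointSfNext M t y a (bOf M ψ t h.2).2.2) := by
      intro x'n c' a y
      have h2 := ih (t+1) (by omega) (extendPriv M h x'n c' a y)
      rw [extendPriv_last M n t h x'n c' a y, bOf_snoc M ψ n hM t h x'n c' a y] at h2
      exact h2
    have hQeq : ∀ an : M.A n,
        QQgen M lam n t (bOf M ψ t h.2) (h.1 (Fin.last t)) an
          (fun x'n c' a y => Ev M ψ n (gOpt M lam ψ n neA) k (t+1)
            (extendPriv M h x'n c' a y))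
        = QQgen M lam n t (bOf M ψ t h.2) (h.1 (Fin.last t)) an
            (fun x'n c' a y => VnAux M lam ψ n neA k (t+1) x'n
              (c', jointPsiNext M ψ t y a (bOf M ψ t h.2),
                jointSfNext M t y a (bOf M ψ t h.2).2.2)) := by
      intro an
      exact congrArg _ (funext fun x'n => funext fun c' => funext fun a =>
        funext fun y => hVn x'n c' a y)
    have hgn : ∀ an : M.A n, gOpt M lam ψ n neA n t h an
        = if an = astar M lam ψ n neA t (h.1 (Fin.last t)) (bOf M ψ t h.2)
          then (1:ℝ) else 0 := by
      intro an
      rw [gOpt_n M lam ψ n neA]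
      rfl
    have hcollapse : ∀ (Q : M.A n → ℝ),
        (∑ an : M.A n, (if an = astar M lam ψ n neA t (h.1 (Fin.last t)) (bOf M ψ t h.2)
            then (1:ℝ) else 0) * Q an)
          = Q (astar M lam ψ n neA t (h.1 (Fin.last t)) (bOf M ψ t h.2)) := by
      intro Q
      have e : ∀ an : M.A n,
          (if an = astar M lam ψ n neA t (h.1 (Fin.last t)) (bOf M ψ t h.2)
            then (1:ℝ) else 0) * Q an
          = if an = astar M lam ψ n neA t (h.1 (Fin.last t)) (bOf M ψ t h.2)
            then Q an else 0 := by
        intro an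
        by_cases hc : an = astar M lam ψ n neA t (h.1 (Fin.last t)) (bOf M ψ t h.2) <;>
          simp [hc]
      rw [Finset.sum_congr rfl fun an _ => e an, Finset.sum_ite_eq' Finset.univ _ Q,
        if_pos (Finset.mem_univ _)]
    calc (∑ an : M.A n, gOpt M lam ψ n neA n t h an *
            QQgen M lam n t (bOf M ψ t h.2) (h.1 (Fin.last t)) an
              (fun x'n c' a y => Ev M ψ n (gOpt M lam ψ n neA) k (t+1)
                (extendPriv M h x'n c' a y)))
        = ∑ an : M.A n,
            (if an = astar M lam ψ n neA t (h.1 (Fin.last t)) (bOf M ψ t h.2)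
              then (1:ℝ) else 0) *
            QQgen M lam n t (bOf M ψ t h.2) (h.1 (Fin.last t)) an
              (fun x'n c' a y => VnAux M lam ψ n neA k (t+1) x'n
                (c', jointPsiNext M ψ t y a (bOf M ψ t h.2),
                  jointSfNext M t y a (bOf M ψ t h.2).2.2)) := by
          refine Finset.sum_congr rfl fun an _ => ?_
          rw [hgn an, hQeq an]
      _ = QQgen M lam n t (bOf M ψ t h.2) (h.1 (Fin.last t))
            (astar M lam ψ n neA t (h.1 (Fin.last t)) (bOf M ψ t h.2))
            (fun x'n c' a y => VnAux M lam ψ n neA k (t+1) x'n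
              (c', jointPsiNext M ψ t y a (bOf M ψ t h.2),
                jointSfNext M t y a (bOf M ψ t h.2).2.2)) := hcollapse _
      _ = VnAux M lam ψ n neA (k+1) t (h.1 (Fin.last t)) (bOf M ψ t h.2) := by
          subst hk
          exact (astar_spec M lam ψ n neA t (h.1 (Fin.last t)) (bOf M ψ t h.2)).symm

end Aux5G

end Aux5

/-- Lemma 4, closedness of CIB strategies under best response: let
`(g, μ) = f(λ, ψ)` be the pair induced by a CIB strategy profile `λ` and a consistent
CIB update rule `ψ`.  If every agent `k ≠ n` uses the CIB strategy `λᵏ` (i.e. `gᵏ`)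
along with the beliefs generated by `ψ`, then there is a CIB strategy `λ'ⁿ` of agent `n`
— a strategy depending on the history only through `(xⁿ_t, c_t, γ_{ψ,t}(h^c_t),
γ̂_t(h^c_t))` — whose induced behavioral strategy `g''ⁿ` is a best response for agent `n`
under `μ` at every history `hⁿ_t`, for all `t`: it maximizes the expected continuation
utility `E_μ[∑_{τ≥t} φⁿ_τ | hⁿ_t]` over all behavioral strategies of agent `n`. -/
theorem stmt_5 (M : Model) (hM : M.Valid)
    (lam : CIBStrat M) (ψ : CIBUpdate M)
    (hlam : IsCIBStrat M lam) (hψ : IsCIBUpdate M ψ)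
    (hcons : UpdateConsistent M ψ lam)
    (μ : BeliefSys M) (μc : ∀ t : ℕ, CommonHist M t → StateTraj M t → ℝ)
    (hμc : ∀ t h, (∀ ξ, 0 ≤ μc t h ξ) ∧ (∑ ξ, μc t h ξ) = 1)
    (hμ : Consistent M (stratOf M lam ψ) μ)
    (hprod : ProductForm M μ μc)
    (hmarg : MarginalMatch M ψ μc)
    (n : Fin M.N) :
    ∃ (lam' : ℕ → M.X n → BSpace M → M.A n → ℝ) (g'' : Strat M),
      (∀ t x b, (∀ a, 0 ≤ lam' t x b a) ∧ (∑ a, lam' t x b a) = 1) ∧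
      IsStrat M g'' ∧
      (∀ m, m ≠ n → g'' m = stratOf M lam ψ m) ∧
      (∀ t (h : PrivHist M n t),
        g'' n t h = lam' t (h.1 (Fin.last t))
          (h.2.1 (Fin.last t), gammaPsi M ψ t h.2, sfCIB M t h.2)) ∧
      (∀ t (h : PrivHist M n t) (g' : Strat M), IsStrat M g' →
        (∀ m, m ≠ n → g' m = stratOf M lam ψ m) →
        expContUtil M g' μ n t h ≤ expContUtil M g'' μ n t h) := by
  classical
  have neC : Nonempty M.C := by
    by_contra hne
    rw [not_nonempty_iff] at hne
    have hs := hM.2.1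
    rw [Finset.univ_eq_empty, Finset.sum_empty] at hs
    norm_num at hs
  have neX : Nonempty (M.X n) := by
    by_contra hne
    rw [not_nonempty_iff] at hne
    have hs := hM.2.2.2.1 n
    rw [Finset.univ_eq_empty, Finset.sum_empty] at hs
    norm_num at hs
  have neA : Nonempty (M.A n) := by
    obtain ⟨x⟩ := neX
    obtain ⟨c⟩ := neC
    by_contra hne
    rw [not_nonempty_iff] at hne
    have hs := (hlam n 0 x (c, fun _ => 0, fun _ => 0)).2
    rw [Finset.univ_eq_empty, Finset.sum_empty] at hs
    norm_num at hs
  refine ⟨fun t xn b => lamOpt M lam ψ n neA t xn b, gOpt M lam ψ n neA, ?_, ?_, ?_, ?_, ?_⟩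
  · intro t x b
    constructor
    · intro a
      unfold lamOpt
      by_cases hc : a = astar M lam ψ n neA t x b <;> simp [hc]
    · unfold lamOpt
      rw [Finset.sum_ite_eq' Finset.univ _ (fun _ => (1:ℝ)), if_pos (Finset.mem_univ _)]
  · intro m t' h'
    by_cases hm : m = n
    · subst hm
      rw [gOpt_n M lam ψ m neA]
      constructor
      · intro a
        unfold lamOpt
        by_cases hc : a = astar M lam ψ m neA t' (h'.1 (Fin.last t')) (bOf M ψ t' h'.2) <;>
          simp [hc]
      · unfold lamOpt
        rw [Finset.sum_ite_eq' Finset.univ _ (fun _ => (1:ℝ)), if_pos (Finset.mem_univ _)]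
    · rw [gOpt_ne M lam ψ n neA m hm]
      constructor
      · intro a
        exact (hlam m t' (h'.1 (Fin.last t')) _).1 a
      · exact (hlam m t' (h'.1 (Fin.last t')) _).2
  · exact fun m hm => gOpt_ne M lam ψ n neA m hm
  · intro t h
    rw [gOpt_n M lam ψ n neA]
    rfl
  · intro t h g' hg's hg'ne
    rw [expContUtil_eq_Ev M lam ψ n μ μc hprod hmarg g' hg'ne t h,
      expContUtil_eq_Ev M lam ψ n μ μc hprod hmarg (gOpt M lam ψ n neA)
        (gOpt_ne M lam ψ n neA) t h,
      Ev_opt M lam ψ n hM hlam hψ hcons neA (M.T - t) t rfl h]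
    exact Ev_le_Vn M lam ψ n hM hlam hψ hcons neA (M.T - t) t h g' hg's hg'ne


end CIBGame
end
end

section
/- In the multiple access broadcast stage game at t=2, for every prior (π^1, π^2) ∈ [0,1]^2 the strategy profile β*_2 = (β*^1_2, β*^2_2) defined by: (1,1) if π^1 < c* and π^2 < c*; (0,1) if π^1 < c* and π^2 ≥ c*; (1,0) if π^1 ≥ c* and π^2 < c*; and (c*/π^1, c*/π^2) if π^1 ≥ c* and π^2 ≥ c*, where c* := (1+cp)/(2+cp), is a Bayesian Nash equilibrium: for each player n, every action a^n in the support of the type-1 mixed action β*^n_2 maximizes the type-1 interim expected utility against β*^{−n}_2. -/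
open Finset

noncomputable section

/-- Payoff of a player of queue length `x ∈ {0,1}` transmitting `a ∈ {0,1}` when the
opponent transmits `aopp ∈ {0,1}`: `(a ⊕ aopp) − c·p·1{x − a(1−aopp) = 1}`. -/
def mabPayoff (c p : ℝ) (x a aopp : ℕ) : ℝ :=
  (if a ≠ aopp then (1 : ℝ) else 0) -
    c * p * (if (x : ℤ) - (a : ℤ) * (1 - (aopp : ℤ)) = 1 then (1 : ℝ) else 0)

/-- Interim expected utility of a player of type `x` taking action `a` when the opponent
has type `1` with probability `πo` and transmits with probability `βo` if of type `1`
(and never transmits if of type `0`). -/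
def mabInterim (c p πo βo : ℝ) (x a : ℕ) : ℝ :=
  πo * (βo * mabPayoff c p x a 1 + (1 - βo) * mabPayoff c p x a 0) +
    (1 - πo) * mabPayoff c p x a 0

lemma mab_diff (c p πo βo : ℝ) :
    mabInterim c p πo βo 1 1 - mabInterim c p πo βo 1 0
      = (1 + c * p) - πo * βo * (2 + c * p) := by
  simp [mabInterim, mabPayoff]
  ring

/-- for every prior `(π1,π2) ∈ [0,1]²` the profile `β*₂` defined piecewise
by the threshold `c* = (1+cp)/(2+cp)` is a Bayesian Nash equilibrium of the multiple
access broadcast stage game at `t = 2`: every pure action in the support of the type-1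
mixed action of each player maximizes his type-1 interim expected utility against the
opponent's strategy. -/
theorem stmt_11 (c p π1 π2 : ℝ) (hc : 0 ≤ c) (hp : p ∈ Set.Icc (0:ℝ) 1)
    (hπ1 : π1 ∈ Set.Icc (0:ℝ) 1) (hπ2 : π2 ∈ Set.Icc (0:ℝ) 1)
    (cs : ℝ) (hcs : cs = (1 + c * p) / (2 + c * p))
    (β1 β2 : ℝ)
    (hβ1 : β1 = if π1 < cs then (if π2 < cs then 1 else 0)
      else (if π2 < cs then 1 else cs / π1))
    (hβ2 : β2 = if π2 < cs then (if π1 < cs then 1 else 0)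
      else (if π1 < cs then 1 else cs / π2)) :
    (0 < β1 → mabInterim c p π2 β2 1 0 ≤ mabInterim c p π2 β2 1 1) ∧
    (β1 < 1 → mabInterim c p π2 β2 1 1 ≤ mabInterim c p π2 β2 1 0) ∧
    (0 < β2 → mabInterim c p π1 β1 1 0 ≤ mabInterim c p π1 β1 1 1) ∧
    (β2 < 1 → mabInterim c p π1 β1 1 1 ≤ mabInterim c p π1 β1 1 0) := by
  have hcp : 0 ≤ c * p := mul_nonneg hc hp.1
  have h2 : (0:ℝ) < 2 + c * p := by linarith
  have hcseq : cs * (2 + c * p) = 1 + c * p := by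
    rw [hcs]; field_simp
  have hcs0 : 0 < cs := by
    rw [hcs]; apply div_pos <;> linarith
  have d1 := mab_diff c p π1 β1
  have d2 := mab_diff c p π2 β2
  rcases lt_or_ge π1 cs with h1 | h1 <;> rcases lt_or_ge π2 cs with h2' | h2' <;>
    simp [h1, h2', not_lt.mpr] at hβ1 hβ2
  · -- both below: β1 = β2 = 1
    subst hβ1 hβ2
    have e1 : π1 * (2 + c * p) ≤ cs * (2 + c * p) :=
      mul_le_mul_of_nonneg_right h1.le h2.le
    have e2 : π2 * (2 + c * p) ≤ cs * (2 + c * p) :=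
      mul_le_mul_of_nonneg_right h2'.le h2.le
    refine ⟨fun _ => by nlinarith, fun h => absurd h (lt_irrefl 1),
      fun _ => by nlinarith, fun h => absurd h (lt_irrefl 1)⟩
  · -- π1 < cs ≤ π2 : β1 = 0, β2 = 1
    subst hβ1 hβ2
    have e1 : π1 * (2 + c * p) ≤ cs * (2 + c * p) :=
      mul_le_mul_of_nonneg_right h1.le h2.le
    have e2 : cs * (2 + c * p) ≤ π2 * (2 + c * p) :=
      mul_le_mul_of_nonneg_right h2' h2.le
    refine ⟨fun h => absurd h (lt_irrefl 0), fun _ => by nlinarith,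
      fun _ => by nlinarith, fun h => by linarith⟩
  · -- π2 < cs ≤ π1 : β1 = 1, β2 = 0
    subst hβ1 hβ2
    have e1 : cs * (2 + c * p) ≤ π1 * (2 + c * p) :=
      mul_le_mul_of_nonneg_right h1 h2.le
    have e2 : π2 * (2 + c * p) ≤ cs * (2 + c * p) :=
      mul_le_mul_of_nonneg_right h2'.le h2.le
    refine ⟨fun _ => by nlinarith, fun h => by linarith,
      fun h => absurd h (lt_irrefl 0), fun _ => by nlinarith⟩
  · -- interior: β1 = cs/π1, β2 = cs/π2
    subst hβ1 hβ2
    have hπ1pos : 0 < π1 := lt_of_lt_of_le hcs0 h1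
    have hπ2pos : 0 < π2 := lt_of_lt_of_le hcs0 h2'
    have e1 : π1 * (cs / π1) = cs := by field_simp
    have e2 : π2 * (cs / π2) = cs := by field_simp
    rw [e1] at d1
    rw [e2] at d2
    exact ⟨fun _ => by linarith, fun _ => by linarith,
      fun _ => by linarith, fun _ => by linarith⟩
end
end

section
/- In the multiple access broadcast stage game at t=2 under the equilibrium profile β*_2, the type-1 equilibrium value of player n satisfies: V^n_2(1, (π^1,π^2)) = 1 − π^{-n}(1+cp) if π^1 < c* and π^2 < c*; V^n_2(1, (π^1,π^2)) = π^{-n} − cp if π^n < c* and π^{-n} ≥ c*; V^n_2(1, (π^1,π^2)) = 1 if π^n ≥ c* and π^{-n} < c*; and V^n_2(1, (π^1,π^2)) = c* − cp if π^1 ≥ c* and π^2 ≥ c*, where c* := (1+cp)/(2+cp). -/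
open Finset

noncomputable section

/-- the type-1 equilibrium values of player `n` (own prior `πn`, opponent
prior `πm`) in the multiple access broadcast stage game at `t = 2` under the equilibrium
profile `β*₂`, with threshold `c* = (1+cp)/(2+cp)`.  `V1` is the expectation of the
payoff over the opponent's type, the opponent's mixed action and player `n`'s own type-1
mixed action `βn`. -/
theorem stmt_12 (c p πn πm : ℝ) (hc : 0 ≤ c) (hp : p ∈ Set.Icc (0:ℝ) 1)
    (hπn : πn ∈ Set.Icc (0:ℝ) 1) (hπm : πm ∈ Set.Icc (0:ℝ) 1)
    (cs : ℝ) (hcs : cs = (1 + c * p) / (2 + c * p))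
    (βn βm : ℝ)
    (hβn : βn = if πn < cs then (if πm < cs then 1 else 0)
      else (if πm < cs then 1 else cs / πn))
    (hβm : βm = if πm < cs then (if πn < cs then 1 else 0)
      else (if πn < cs then 1 else cs / πm))
    (V1 : ℝ)
    (hV1 : V1 = βn * mabInterim c p πm βm 1 1 + (1 - βn) * mabInterim c p πm βm 1 0) :
    (πn < cs → πm < cs → V1 = 1 - πm * (1 + c * p)) ∧
    (πn < cs → cs ≤ πm → V1 = πm - c * p) ∧
    (cs ≤ πn → πm < cs → V1 = 1) ∧
    (cs ≤ πn → cs ≤ πm → V1 = cs - c * p) := by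
  have hcp : 0 ≤ c * p := mul_nonneg hc hp.1
  have h2 : (0:ℝ) < 2 + c * p := by linarith
  have hcs0 : 0 < cs := by rw [hcs]; positivity
  refine ⟨?_, ?_, ?_, ?_⟩ <;> intro h1 h2'
  · subst hV1 hβn hβm
    simp only [if_pos h1, if_pos h2', mabInterim, mabPayoff]
    norm_num
    ring
  · subst hV1 hβn hβm
    simp only [if_pos h1, if_neg (not_lt.2 h2'), mabInterim, mabPayoff]
    norm_num; ring
  · subst hV1 hβn hβm
    simp only [if_neg (not_lt.2 h1), if_pos h2', mabInterim, mabPayoff]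
    norm_num
  · have hπn0 : 0 < πn := lt_of_lt_of_le hcs0 h1
    have hπm0 : 0 < πm := lt_of_lt_of_le hcs0 h2'
    subst hV1 hβn hβm
    simp only [if_neg (not_lt.2 h1), if_neg (not_lt.2 h2'), mabInterim, mabPayoff]
    norm_num
    subst hcs
    field_simp
    ring
end
end

section
/- In the multiple access broadcast stage game at t=2 under the equilibrium profile β*_2, the type-0 equilibrium value of player n satisfies: V^n_2(0, (π^1,π^2)) = π^{-n} if π^1 < c* and π^2 < c*; V^n_2(0, (π^1,π^2)) = π^{-n} if π^n < c* and π^{-n} ≥ c*; V^n_2(0, (π^1,π^2)) = 0 if π^n ≥ c* and π^{-n} < c*; and V^n_2(0, (π^1,π^2)) = c* if π^1 ≥ c* and π^2 ≥ c*, where c* := (1+cp)/(2+cp). -/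
open Finset

noncomputable section

/-- the type-0 equilibrium values of player `n` (own prior `πn`, opponent
prior `πm`) in the multiple access broadcast stage game at `t = 2` under the equilibrium
profile `β*₂`, with threshold `c* = (1+cp)/(2+cp)`.  A type-0 player never transmits, so
his value is the interim expected utility of type `0` taking action `0`. -/
theorem stmt_13 (c p πn πm : ℝ) (hc : 0 ≤ c) (hp : p ∈ Set.Icc (0:ℝ) 1)
    (hπn : πn ∈ Set.Icc (0:ℝ) 1) (hπm : πm ∈ Set.Icc (0:ℝ) 1)
    (cs : ℝ) (hcs : cs = (1 + c * p) / (2 + c * p))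
    (βn βm : ℝ)
    (hβn : βn = if πn < cs then (if πm < cs then 1 else 0)
      else (if πm < cs then 1 else cs / πn))
    (hβm : βm = if πm < cs then (if πn < cs then 1 else 0)
      else (if πn < cs then 1 else cs / πm))
    (V0 : ℝ)
    (hV0 : V0 = mabInterim c p πm βm 0 0) :
    (πn < cs → πm < cs → V0 = πm) ∧
    (πn < cs → cs ≤ πm → V0 = πm) ∧
    (cs ≤ πn → πm < cs → V0 = 0) ∧
    (cs ≤ πn → cs ≤ πm → V0 = cs) := by
  have hcp : 0 ≤ c * p := mul_nonneg hc hp.1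
  have hcs0 : 0 < cs := by
    rw [hcs]; positivity
  have hV : V0 = πm * βm := by
    simp [hV0, mabInterim, mabPayoff]
  refine ⟨?_, ?_, ?_, ?_⟩
  · intro h1 h2; rw [hV, hβm, if_pos h2, if_pos h1]; ring
  · intro h1 h2; rw [hV, hβm, if_neg (not_lt.2 h2), if_pos h1]; ring
  · intro h1 h2; rw [hV, hβm, if_pos h2, if_neg (not_lt.2 h1)]; ring
  · intro h1 h2
    have hπm0 : πm ≠ 0 := (lt_of_lt_of_le hcs0 h2).ne'
    rw [hV, hβm, if_neg (not_lt.2 h2), if_neg (not_lt.2 h1)]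
    field_simp
end
end
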